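/- arXiv:2409.10005 — 10 statements merged into one kernel-verified Lean document; each statement's English description precedes it below -/
import Mathlib

section
/- For every integer n ≥ 1, every real number s > 1, and every ε with 0 < ε < 1, the function f : ℂ^n → ℝ given by f(z) = 1 / ( |∏_{i=1}^n ln|z_i||^s · ∏_{i=1}^n |z_i|^2 ) is integrable (with respect to Lebesgue measure on ℂ^n) on the ball { z ∈ ℂ^n : ‖z‖ < ε }. -/
/-!
The integrand is the product over the coordinates of `g(w) = 1 / (|ln |w||^s |w|²)`, and the
sup-norm ball in `ℂⁿ` is the product of the coordinate discs, so by Fubini it suffices that `g` is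
integrable on a disc. As a radial function on `ℂ ≅ ℝ²` this reduces, with the Jacobian `r` of polar
coordinates, to integrability of `1 / (r |ln r|^s)` on `(0, ε)`; the substitution `r = eᵗ` turns
that into `|t|^(-s)` on `(-∞, ln ε)`, which is integrable because `s > 1`.
-/

open MeasureTheory Set Metric Real Module

theorem integrableOn_Ioo_one_div_mul_abs_log_rpow {s ε : ℝ} (hs : 1 < s) (hε0 : 0 < ε)
    (hε1 : ε < 1) : IntegrableOn (fun r : ℝ => 1 / (r * |log r| ^ s)) (Ioo 0 ε) := by
  have hlogε : log ε < 0 := log_neg hε0 hε1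
  rw [← exp_log hε0, ← image_exp_Iio,
    integrableOn_image_iff_integrableOn_deriv_smul_of_monotoneOn measurableSet_Iio
      (fun t _ => (hasDerivAt_exp t).hasDerivWithinAt) (exp_monotone.monotoneOn _)]
  have hpow : IntegrableOn (fun t : ℝ => (-t) ^ (-s)) (Iio (log ε)) :=
    (integrableOn_Ioi_rpow_of_lt (by linarith) (by linarith)).comp_neg_Iio
  refine hpow.congr_fun (fun t (ht : t < log ε) => ?_) measurableSet_Iio
  dsimp only
  rw [log_exp, abs_of_neg (ht.trans hlogε), rpow_neg (by linarith), smul_eq_mul]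
  field_simp

theorem integrableOn_ball_one_div_abs_log_rpow_mul_norm_pow_finrank {E : Type*}
    [NormedAddCommGroup E] [NormedSpace ℝ E] [MeasurableSpace E] [BorelSpace E]
    [FiniteDimensional ℝ E] [Nontrivial E] (μ : Measure E) [μ.IsAddHaarMeasure]
    {s ε : ℝ} (hs : 1 < s) (hε0 : 0 < ε) (hε1 : ε < 1) :
    IntegrableOn (fun x : E => 1 / (|log ‖x‖| ^ s * ‖x‖ ^ finrank ℝ E)) (ball 0 ε) μ := by
  rw [integrableOn_fun_norm_addHaar μ (f := fun r => 1 / (|log r| ^ s * r ^ finrank ℝ E))]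
  refine (integrableOn_Ioo_one_div_mul_abs_log_rpow hs hε0 hε1).congr_fun
    (fun r ⟨hr0, _⟩ => ?_) measurableSet_Ioo
  obtain ⟨d, hd⟩ := Nat.exists_eq_succ_of_ne_zero (finrank_pos (R := ℝ) (M := E)).ne'
  dsimp only
  rw [smul_eq_mul, hd, Nat.succ_sub_one, pow_succ]
  field_simp

theorem MeasureTheory.IntegrableOn.fintype_prod {ι E 𝕜 : Type*} [Fintype ι] [NormedCommRing 𝕜]
    [MeasurableSpace E] {μ : ι → Measure E} [∀ i, SigmaFinite (μ i)] {f : ι → E → 𝕜}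
    {s : ι → Set E} (hf : ∀ i, IntegrableOn (f i) (s i) (μ i)) :
    IntegrableOn (fun x : ι → E => ∏ i, f i (x i)) (univ.pi s) (Measure.pi μ) := by
  rw [IntegrableOn, Measure.restrict_pi_pi]
  exact Integrable.fintype_prod hf

theorem stmt_0_general (n : ℕ) (s : ℝ) (hs : 1 < s)
    (ε : ℝ) (hε0 : 0 < ε) (hε1 : ε < 1) :
    IntegrableOn
      (fun z : Fin n → ℂ =>
        1 / (|∏ i, Real.log ‖z i‖| ^ s * ∏ i, ‖z i‖ ^ 2))
      (Metric.ball 0 ε) := by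
  have hfactor : (fun z : Fin n → ℂ => 1 / (|∏ i, log ‖z i‖| ^ s * ∏ i, ‖z i‖ ^ 2)) =
      fun z => ∏ i, 1 / (|log ‖z i‖| ^ s * ‖z i‖ ^ 2) := by
    funext z
    rw [Finset.abs_prod, ← finsetProd_rpow _ _ (fun i _ => abs_nonneg _),
      ← Finset.prod_mul_distrib, Finset.prod_div_distrib, Finset.prod_const_one]
  have hdisc : IntegrableOn (fun w : ℂ => 1 / (|log ‖w‖| ^ s * ‖w‖ ^ 2)) (ball 0 ε) := by
    simpa [Complex.finrank_real_complex] using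
      integrableOn_ball_one_div_abs_log_rpow_mul_norm_pow_finrank (volume : Measure ℂ) hs hε0 hε1
  rw [hfactor, ball_pi _ hε0, volume_pi]
  exact IntegrableOn.fintype_prod fun _ => hdisc

/-- Lemma 3.1(i), convergence: for `s > 1`, the function
`z ↦ 1 / (|∏ i, ln |z_i||^s · ∏ i, |z_i|²)` is integrable on a small ball in `ℂⁿ`. -/
theorem stmt_0 (n : ℕ) (hn : 1 ≤ n) (s : ℝ) (hs : 1 < s)
    (ε : ℝ) (hε0 : 0 < ε) (hε1 : ε < 1) :
    IntegrableOn
      (fun z : Fin n → ℂ =>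
        1 / (|∏ i, Real.log ‖z i‖| ^ s * ∏ i, ‖z i‖ ^ 2))
      (Metric.ball 0 ε) :=
  stmt_0_general n s hs ε hε0 hε1
end

section
/- For every integer n ≥ 1 and every ε with 0 < ε < 1, the function f : ℂ^n → ℝ given by f(z) = 1 / ( |∏_{i=1}^n ln|z_i|| · ∏_{i=1}^n |z_i|^2 ) is NOT integrable (with respect to Lebesgue measure on ℂ^n) on the ball { z ∈ ℂ^n : ‖z‖ < ε }. -/
/-!
On the polydisc `‖z‖ < ε` (sup norm) the integrand is a product `∏ i, g (z i)` with
`g w = 1 / (|log ‖w‖| * ‖w‖ ^ 2)`, so by Tonelli its Lebesgue integral is the `n`-th power of that of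
`g` over the disc. In polar coordinates `g` becomes `1 / (r |log r|)`, up to sign the derivative
of `log |log r|`, which is unbounded as `r → 0⁺`; hence `g` is not integrable near `0`.
-/

open MeasureTheory Real Set Filter Topology Asymptotics
open scoped ENNReal

theorem not_integrableOn_Ioo_inv_mul_abs_log {ε : ℝ} (hε : 0 < ε) :
    ¬ IntegrableOn (fun y ↦ (y * |log y|)⁻¹) (Ioo 0 ε) := by
  have hderiv : ∀ᶠ y in 𝓝[>] (0 : ℝ), HasDerivAt (fun y ↦ log (log y)) (y⁻¹ / log y) y := by
    filter_upwards [Ioo_mem_nhdsGT zero_lt_one] with y ⟨hy0, hy1⟩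
    exact (hasDerivAt_log hy0.ne').log (log_neg hy0 hy1).ne
  have htendsto : Tendsto (fun y ↦ ‖log (log y)‖) (𝓝[>] 0) atTop := by
    simp_rw [← log_abs (log _)]
    exact tendsto_norm_atTop_atTop.comp
      (tendsto_log_atTop.comp (tendsto_abs_atBot_atTop.comp tendsto_log_nhdsGT_zero))
  refine not_integrableOn_of_tendsto_norm_atTop_of_deriv_isBigO_filter (𝓝[>] 0)
    (Ioo_mem_nhdsGT hε) (hderiv.mono fun y hy ↦ hy.differentiableAt) htendsto ?_
  refine IsBigO.of_bound 1 ?_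
  filter_upwards [hderiv, self_mem_nhdsWithin] with y hy (hy0 : 0 < y)
  simp [hy.deriv, abs_of_pos hy0, div_eq_inv_mul, mul_comm]

section NormPow

variable {E : Type*} [NormedAddCommGroup E] [NormedSpace ℝ E] [MeasurableSpace E] [BorelSpace E]
  [FiniteDimensional ℝ E] [Nontrivial E] (μ : Measure E) [μ.IsAddHaarMeasure]

theorem not_integrableOn_ball_inv_abs_log_mul_norm_pow {ε : ℝ} (hε : 0 < ε) :
    ¬ IntegrableOn (fun x : E ↦ 1 / (|log ‖x‖| * ‖x‖ ^ Module.finrank ℝ E))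
      (Metric.ball 0 ε) μ := by
  rw [integrableOn_fun_norm_addHaar μ (f := fun r ↦ 1 / (|log r| * r ^ Module.finrank ℝ E)),
    integrableOn_congr_fun ?_ measurableSet_Ioo]
  · exact not_integrableOn_Ioo_inv_mul_abs_log hε
  rintro y ⟨hy0, -⟩
  have hd : 0 < Module.finrank ℝ E := Module.finrank_pos
  dsimp only
  rw [smul_eq_mul, ← pow_sub_one_mul hd.ne' y]
  field_simp

theorem setLIntegral_ball_inv_abs_log_mul_norm_pow_eq_top {ε : ℝ} (hε : 0 < ε) :
    ∫⁻ x in Metric.ball 0 ε, ENNReal.ofReal (1 / (|log ‖x‖| * ‖x‖ ^ Module.finrank ℝ E)) ∂μ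
      = ∞ := by
  by_contra hne
  refine not_integrableOn_ball_inv_abs_log_mul_norm_pow μ hε ?_
  exact (lintegral_ofReal_ne_top_iff_integrable (Measurable.aestronglyMeasurable (by fun_prop))
    (.of_forall fun x ↦ by positivity)).1 hne

end NormPow

section PiProd

variable {E : Type*} [MeasurableSpace E]

theorem lintegral_fin_nat_prod_eq_prod {n : ℕ} {μ : Fin n → Measure E} [∀ i, SigmaFinite (μ i)]
    {f : Fin n → E → ℝ≥0∞} (hf : ∀ i, Measurable (f i)) :
    ∫⁻ x : Fin n → E, ∏ i, f i (x i) ∂(Measure.pi μ) = ∏ i, ∫⁻ x, f i x ∂(μ i) := by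
  induction n with
  | zero => simp
  | succ n ih =>
      calc
        _ = ∫⁻ x : E × (Fin n → E), f 0 x.1 * ∏ i : Fin n, f i.succ (x.2 i)
            ∂((μ 0).prod (Measure.pi (fun i ↦ μ i.succ))) := by
          rw [← ((measurePreserving_piFinSuccAbove μ 0).symm).lintegral_comp_emb
            (MeasurableEquiv.measurableEmbedding _)]
          simp_rw [MeasurableEquiv.piFinSuccAbove_symm_apply, Fin.insertNthEquiv,
            Fin.prod_univ_succ, Fin.insertNth_zero, Equiv.coe_fn_mk, Fin.cons_succ,
            Fin.zero_succAbove, cast_eq, Fin.cons_zero]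
        _ = (∫⁻ x, f 0 x ∂μ 0) * ∏ i : Fin n, ∫⁻ x, f i.succ x ∂(μ i.succ) := by
          have hprod : Measurable fun x : Fin n → E ↦ ∏ i, f i.succ (x i) := by
            fun_prop
          rw [lintegral_prod_mul (hf 0).aemeasurable hprod.aemeasurable, ih fun i ↦ hf i.succ]
        _ = ∏ i, ∫⁻ x, f i x ∂(μ i) := (Fin.prod_univ_succ (fun i ↦ ∫⁻ x, f i x ∂(μ i))).symm

variable {ι : Type*} [Fintype ι] {μ : ι → Measure E} [∀ i, SigmaFinite (μ i)]
  {f : ι → E → ℝ≥0∞}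

theorem lintegral_fintype_prod_eq_prod (hf : ∀ i, Measurable (f i)) :
    ∫⁻ x : ι → E, ∏ i, f i (x i) ∂(Measure.pi μ) = ∏ i, ∫⁻ x, f i x ∂(μ i) := by
  let e := (Fintype.equivFin ι).symm
  rw [← (measurePreserving_piCongrLeft _ e).lintegral_comp_emb
    (MeasurableEquiv.measurableEmbedding _)]
  simp_rw [← e.prod_comp, MeasurableEquiv.coe_piCongrLeft, Equiv.piCongrLeft_apply_apply]
  exact lintegral_fin_nat_prod_eq_prod fun i ↦ hf (e i)

theorem setLIntegral_univ_pi_prod_eq_prod (hf : ∀ i, Measurable (f i)) (s : ι → Set E) :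
    ∫⁻ x in univ.pi s, ∏ i, f i (x i) ∂(Measure.pi μ) = ∏ i, ∫⁻ x in s i, f i x ∂(μ i) := by
  rw [Measure.restrict_pi_pi, lintegral_fintype_prod_eq_prod hf]

end PiProd

theorem stmt_1_general (n : ℕ) (hn : 1 ≤ n) (ε : ℝ) (hε0 : 0 < ε) :
    ¬ IntegrableOn
      (fun z : Fin n → ℂ =>
        1 / (|∏ i, Real.log ‖z i‖| * ∏ i, ‖z i‖ ^ 2))
      (Metric.ball 0 ε) := by
  set g : ℂ → ℝ≥0∞ := fun w ↦ ENNReal.ofReal (1 / (|log ‖w‖| * ‖w‖ ^ 2))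
  have hg_top : ∫⁻ w in Metric.ball 0 ε, g w = ∞ := by
    simpa only [Complex.finrank_real_complex] using
      setLIntegral_ball_inv_abs_log_mul_norm_pow_eq_top (volume : Measure ℂ) hε0
  have hprod : ∀ z : Fin n → ℂ,
      ENNReal.ofReal (1 / (|∏ i, Real.log ‖z i‖| * ∏ i, ‖z i‖ ^ 2)) = ∏ i, g (z i) := fun z ↦ by
    rw [← ENNReal.ofReal_prod_of_nonneg fun i _ ↦ by positivity]
    simp only [Finset.abs_prod, ← Finset.prod_mul_distrib, one_div, Finset.prod_inv_distrib]
  intro h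
  have hfin := h.lintegral_lt_top
  simp_rw [hprod, ball_pi _ hε0, volume_pi, Pi.zero_apply] at hfin
  rw [setLIntegral_univ_pi_prod_eq_prod (fun _ ↦ by fun_prop)] at hfin
  simp [hg_top, ENNReal.top_pow (by omega : n ≠ 0)] at hfin

/-- Lemma 3.1(i), divergence at `s = 1`: the function
`z ↦ 1 / (|∏ i, ln |z_i|| · ∏ i, |z_i|²)` is not integrable on any small ball in `ℂⁿ`. -/
theorem stmt_1 (n : ℕ) (hn : 1 ≤ n) (ε : ℝ) (hε0 : 0 < ε) (hε1 : ε < 1) :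
    ¬ IntegrableOn
      (fun z : Fin n → ℂ =>
        1 / (|∏ i, Real.log ‖z i‖| * ∏ i, ‖z i‖ ^ 2))
      (Metric.ball 0 ε) :=
  stmt_1_general n hn ε hε0
end

section
/- For every integer n ≥ 1, every real number s > n, and every ε with 0 < ε < 1, the function f : ℂ^n → ℝ given by f(z) = 1 / ( |ln|z_1| + … + ln|z_n||^s · ∏_{i=1}^n |z_i|^2 ) is integrable (with respect to Lebesgue measure on ℂ^n) on the ball { z ∈ ℂ^n : ‖z‖ < ε }. -/
/-!
When every `|z_i| < 1`, AM-GM gives `∏ |log |z_i||^(s/n) ≤ |∑ log |z_i||^s`, so the integrand is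
dominated on the polydisc by a product of one-variable functions `|log |w||^(-q) |w|^(-2)` with
`q = s/n > 1`. In polar coordinates each factor becomes `1 / (r |log r|^q)`, which is integrable
near `0` because `q > 1` (substitute `r = e^(-t)`).
-/

open MeasureTheory Set Real Finset

lemma integrableOn_one_div_mul_abs_log_rpow {q ε : ℝ} (hq : 1 < q) (hε0 : 0 < ε) (hε1 : ε < 1) :
    IntegrableOn (fun r : ℝ => 1 / (r * |log r| ^ q)) (Ioo 0 ε) := by
  have hδ : 0 < -log ε := neg_pos.2 (log_neg hε0 hε1)
  have himage : (fun t => exp (-t)) '' Ioi (-log ε) = Ioo 0 ε := by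
    rw [← Function.comp_def, image_comp, image_neg_Ioi, neg_neg, image_exp_Iio, exp_log hε0]
  rw [← himage, integrableOn_image_iff_integrableOn_deriv_smul_of_antitoneOn measurableSet_Ioi
    (fun t _ => (hasDerivAt_neg t).exp.hasDerivWithinAt)
    (fun a _ b _ hab => exp_le_exp.2 (neg_le_neg hab))]
  refine (integrableOn_Ioi_rpow_of_lt (neg_lt_neg hq) hδ).congr_fun (fun t ht => ?_)
    measurableSet_Ioi
  have ht : 0 < t := hδ.trans ht
  simp only [rpow_neg ht.le, mul_neg, mul_one, neg_neg, log_exp, abs_neg, abs_of_pos ht,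
    smul_eq_mul]
  field_simp

lemma integrableOn_one_div_abs_log_rpow_mul_norm_pow_finrank
    {E : Type*} [NormedAddCommGroup E] [NormedSpace ℝ E] [FiniteDimensional ℝ E] [Nontrivial E]
    [MeasurableSpace E] [BorelSpace E] (μ : Measure E) [μ.IsAddHaarMeasure]
    {q ε : ℝ} (hq : 1 < q) (hε0 : 0 < ε) (hε1 : ε < 1) :
    IntegrableOn (fun x : E => 1 / (|log ‖x‖| ^ q * ‖x‖ ^ Module.finrank ℝ E))
      (Metric.ball 0 ε) μ := by
  rw [integrableOn_fun_norm_addHaar μ (f := fun r => 1 / (|log r| ^ q * r ^ Module.finrank ℝ E))]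
  refine (integrableOn_one_div_mul_abs_log_rpow hq hε0 hε1).congr_fun (fun r hr => ?_)
    measurableSet_Ioo
  obtain ⟨d, hd⟩ := Nat.exists_eq_add_one_of_ne_zero (Module.finrank_pos (R := ℝ) (M := E)).ne'
  have hr : 0 < r := hr.1
  rw [hd, smul_eq_mul, Nat.add_sub_cancel, pow_succ]
  field_simp

lemma prod_rpow_div_card_le_sum_rpow {ι : Type*} [Fintype ι] [Nonempty ι] {t : ι → ℝ}
    (ht : ∀ i, 0 ≤ t i) {p : ℝ} (hp : 0 ≤ p) :
    ∏ i, t i ^ (p / Fintype.card ι) ≤ (∑ i, t i) ^ p := by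
  have hn : (1 : ℝ) ≤ Fintype.card ι := Nat.one_le_cast.2 Fintype.card_pos
  have amgm : (∏ i, t i) ^ (Fintype.card ι : ℝ)⁻¹ ≤ (∑ i, t i) / Fintype.card ι := by
    simpa using geom_mean_le_arith_mean univ (fun _ => 1) t (fun _ _ => zero_le_one)
      (by simpa using Fintype.card_pos) (fun i _ => ht i)
  calc ∏ i, t i ^ (p / Fintype.card ι)
      = ((∏ i, t i) ^ (Fintype.card ι : ℝ)⁻¹) ^ p := by
        rw [finsetProd_rpow _ _ (fun i _ => ht i), ← rpow_mul (prod_nonneg fun i _ => ht i),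
          inv_mul_eq_div]
    _ ≤ ((∑ i, t i) / Fintype.card ι) ^ p := by
        gcongr
        exact rpow_nonneg (prod_nonneg fun i _ => ht i) _
    _ ≤ (∑ i, t i) ^ p := by
        gcongr
        · exact div_nonneg (sum_nonneg fun i _ => ht i) (by positivity)
        · exact div_le_self (sum_nonneg fun i _ => ht i) hn

lemma one_div_abs_sum_log_rpow_mul_prod_pow_le {ι : Type*} [Fintype ι] [Nonempty ι]
    {r : ι → ℝ} (hr0 : ∀ i, 0 ≤ r i) (hr1 : ∀ i, r i < 1) {s : ℝ} (hs : 0 ≤ s)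
    {k : ℕ} (hk : k ≠ 0) :
    1 / (|∑ i, log (r i)| ^ s * ∏ i, r i ^ k) ≤
      ∏ i, 1 / (|log (r i)| ^ (s / Fintype.card ι) * r i ^ k) := by
  rw [prod_div_distrib, prod_const_one, prod_mul_distrib]
  by_cases hzero : ∃ i, r i = 0
  · obtain ⟨i, hi⟩ := hzero
    have : ∏ i, r i ^ k = 0 := prod_eq_zero (mem_univ i) (by simp [hi, hk])
    simp [this]
  push Not at hzero
  have hr : ∀ i, 0 < r i := fun i => (hr0 i).lt_of_ne' (hzero i)
  have hlog : ∀ i, log (r i) < 0 := fun i => log_neg (hr i) (hr1 i)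
  apply one_div_le_one_div_of_le
  · exact mul_pos (prod_pos fun i _ => rpow_pos_of_pos (abs_pos.2 (hlog i).ne) _)
      (prod_pos fun i _ => pow_pos (hr i) k)
  refine mul_le_mul_of_nonneg_right ?_ (prod_nonneg fun i _ => (pow_pos (hr i) k).le)
  simp only [abs_of_neg, hlog]
  rw [abs_of_nonpos (sum_nonpos fun i _ => (hlog i).le), ← sum_neg_distrib]
  exact prod_rpow_div_card_le_sum_rpow (fun i => (neg_pos.2 (hlog i)).le) hs

/-- Lemma 3.1(ii), convergence: for `s > n`, the function
`z ↦ 1 / (|∑ i, ln |z_i||^s · ∏ i, |z_i|²)` is integrable on a small ball in `ℂⁿ`. -/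
theorem stmt_2 (n : ℕ) (hn : 1 ≤ n) (s : ℝ) (hs : (n : ℝ) < s)
    (ε : ℝ) (hε0 : 0 < ε) (hε1 : ε < 1) :
    IntegrableOn
      (fun z : Fin n → ℂ =>
        1 / (|∑ i, Real.log ‖z i‖| ^ s * ∏ i, ‖z i‖ ^ 2))
      (Metric.ball 0 ε) := by
  have : Nonempty (Fin n) := ⟨⟨0, hn⟩⟩
  have hs0 : 0 ≤ s := (Nat.cast_nonneg n).trans hs.le
  have hq : 1 < s / n := (one_lt_div (by exact_mod_cast hn)).2 hs
  set g : ℂ → ℝ := fun w => 1 / (|log ‖w‖| ^ (s / n) * ‖w‖ ^ 2)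
  have hg : IntegrableOn g (Metric.ball 0 ε) := by
    simpa only [Complex.finrank_real_complex] using
      integrableOn_one_div_abs_log_rpow_mul_norm_pow_finrank (volume : Measure ℂ) hq hε0 hε1
  have hdom : IntegrableOn (fun z : Fin n → ℂ => ∏ i, g (z i)) (Metric.ball 0 ε) := by
    rw [IntegrableOn, ball_pi _ hε0, volume_pi, Measure.restrict_pi_pi]
    exact Integrable.fintype_prod fun _ => hg
  refine hdom.mono' (by fun_prop : Measurable _).aestronglyMeasurable ?_
  filter_upwards [ae_restrict_mem measurableSet_ball] with z hz
  have hz1 : ∀ i, ‖z i‖ < 1 := fun i =>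
    ((norm_le_pi_norm z i).trans_lt (mem_ball_zero_iff.1 hz)).trans hε1
  rw [Real.norm_eq_abs, abs_of_nonneg (by positivity)]
  simpa only [Fintype.card_fin] using
    one_div_abs_sum_log_rpow_mul_prod_pow_le (fun i => norm_nonneg (z i)) hz1 hs0 two_ne_zero
end

section
/- For every integer n ≥ 1 and every ε with 0 < ε < 1, the function f : ℂ^n → ℝ given by f(z) = 1 / ( |ln|z_1| + … + ln|z_n||^n · ∏_{i=1}^n |z_i|^2 ) is NOT integrable (with respect to Lebesgue measure on ℂ^n) on the ball { z ∈ ℂ^n : ‖z‖ < ε }. -/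
open MeasureTheory Real Set Function
open scoped ENNReal

/-!
Cut the ball into the log-boxes `∏ᵢ {e^(-kᵢ-1) < |zᵢ| < e^(-kᵢ)}`, `k ∈ ℕⁿ`. With `M = ∑ kᵢ`,
the integrand is at least `e^(2M) / (M + n)ⁿ` on such a box, whose volume is `cⁿ e^(-2M)`, so the
box contributes at least `cⁿ / (M + n)ⁿ`. The boxes inside the ball therefore bound the integral
from below by a multiple of `∑_{k ∈ ℕⁿ} (A + ∑ kᵢ)^(-n)`, and this series diverges: summing out
one coordinate, `∑ⱼ (B + j)^(-(m+1)) ≥ 2^(-(m+1)) B^(-m)`, lowers the dimension and the exponent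
together, down to the harmonic series.
-/

lemma tsum_ofReal_one_div_add_natCast_eq_top {A : ℝ} (hA : 0 < A) :
    ∑' j : ℕ, ENNReal.ofReal (1 / (A + j)) = ∞ := by
  by_contra h
  have hsum : Summable fun j : ℕ => 1 / |(j : ℝ) + A| ^ (1 : ℝ) :=
    (ENNReal.summable_toReal h).congr fun j => by
      rw [ENNReal.toReal_ofReal (by positivity), rpow_one, abs_of_pos (by positivity), add_comm]
  exact lt_irrefl _ ((summable_one_div_nat_add_rpow A 1).1 hsum)

lemma one_div_two_pow_mul_pow_le_sum_range {B : ℝ} (hB : 0 < B) (m : ℕ) :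
    1 / (2 ^ (m + 1) * B ^ m) ≤ ∑ j ∈ Finset.range ⌈B⌉₊, 1 / (B + j) ^ (m + 1) := by
  have hterm : ∀ j ∈ Finset.range ⌈B⌉₊, 1 / (2 * B) ^ (m + 1) ≤ 1 / (B + j) ^ (m + 1) := by
    intro j hj
    have hj : (j : ℝ) + 1 ≤ ⌈B⌉₊ := by exact_mod_cast Finset.mem_range.1 hj
    have := Nat.ceil_lt_add_one hB.le
    gcongr
    linarith
  calc 1 / (2 ^ (m + 1) * B ^ m) = B * (1 / (2 * B) ^ (m + 1)) := by field_simp; ring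
    _ ≤ ⌈B⌉₊ * (1 / (2 * B) ^ (m + 1)) := by gcongr; exact Nat.le_ceil B
    _ = ∑ _j ∈ Finset.range ⌈B⌉₊, 1 / (2 * B) ^ (m + 1) := by simp
    _ ≤ _ := Finset.sum_le_sum hterm

lemma ofReal_le_tsum_ofReal_one_div_add_pow {B : ℝ} (hB : 0 < B) (m : ℕ) :
    ENNReal.ofReal (1 / (2 ^ (m + 1) * B ^ m)) ≤
      ∑' j : ℕ, ENNReal.ofReal (1 / (B + j) ^ (m + 1)) :=
  calc ENNReal.ofReal (1 / (2 ^ (m + 1) * B ^ m))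
      ≤ ENNReal.ofReal (∑ j ∈ Finset.range ⌈B⌉₊, 1 / (B + j) ^ (m + 1)) :=
        ENNReal.ofReal_le_ofReal (one_div_two_pow_mul_pow_le_sum_range hB m)
    _ = ∑ j ∈ Finset.range ⌈B⌉₊, ENNReal.ofReal (1 / (B + j) ^ (m + 1)) :=
        ENNReal.ofReal_sum_of_nonneg fun j _ => by positivity
    _ ≤ _ := ENNReal.sum_le_tsum _

lemma tsum_ofReal_one_div_add_sum_pow_eq_top {m : ℕ} (hm : 1 ≤ m) {A : ℝ} (hA : 0 < A) :
    ∑' k : Fin m → ℕ, ENNReal.ofReal (1 / (A + ∑ i, (k i : ℝ)) ^ m) = ∞ := by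
  induction m, hm using Nat.le_induction generalizing A with
  | base =>
    rw [← (Equiv.funUnique (Fin 1) ℕ).symm.tsum_eq]
    simpa using tsum_ofReal_one_div_add_natCast_eq_top hA
  | succ m hm ih =>
    rw [← (Fin.consEquiv fun _ => ℕ).tsum_eq, ENNReal.tsum_prod', ENNReal.tsum_comm]
    refine top_unique ?_
    calc ∞ = ∑' t : Fin m → ℕ,
          ENNReal.ofReal (1 / (2 ^ (m + 1) * (A + ∑ i, (t i : ℝ)) ^ m)) := by
          simp_rw [← one_div_mul_one_div, ENNReal.ofReal_mul (by positivity : (0 : ℝ) ≤ 1 / 2 ^ _),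
            ENNReal.tsum_mul_left, ih hA]
          exact (ENNReal.mul_top (by simp)).symm
      _ ≤ _ := ENNReal.tsum_le_tsum fun t => ?_
    have hB : 0 < A + ∑ i, (t i : ℝ) := by positivity
    convert ofReal_le_tsum_ofReal_one_div_add_pow hB m using 4 with j
    simp only [Fin.consEquiv_apply, Fin.sum_univ_succ, Fin.cons_zero, Fin.cons_succ]
    ring

def logAnnulus (m : ℕ) : Set ℂ :=
  Metric.ball 0 (exp (-m)) \ Metric.closedBall 0 (exp (-m - 1))

lemma mem_logAnnulus {m : ℕ} {w : ℂ} :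
    w ∈ logAnnulus m ↔ exp (-m - 1) < ‖w‖ ∧ ‖w‖ < exp (-m) := by
  simp [logAnnulus, and_comm]

lemma measurableSet_logAnnulus (m : ℕ) : MeasurableSet (logAnnulus m) :=
  measurableSet_ball.diff measurableSet_closedBall

lemma log_norm_mem_Ioo_of_mem_logAnnulus {m : ℕ} {w : ℂ} (hw : w ∈ logAnnulus m) :
    log ‖w‖ ∈ Ioo (-m - 1 : ℝ) (-m) := by
  obtain ⟨hlow, hup⟩ := mem_logAnnulus.1 hw
  have hpos : 0 < ‖w‖ := (exp_pos _).trans hlow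
  exact ⟨(lt_log_iff_exp_lt hpos).2 hlow, (log_lt_iff_lt_exp hpos).2 hup⟩

lemma pairwise_disjoint_logAnnulus : Pairwise (Disjoint on logAnnulus) := by
  intro m m' hne
  rw [Function.onFun, Set.disjoint_left]
  intro w hw hw'
  obtain ⟨h1, h2⟩ := log_norm_mem_Ioo_of_mem_logAnnulus hw
  obtain ⟨h1', h2'⟩ := log_norm_mem_Ioo_of_mem_logAnnulus hw'
  rcases Nat.lt_or_gt_of_ne hne with h | h
  · have : (m : ℝ) + 1 ≤ m' := by exact_mod_cast h
    linarith
  · have : (m' : ℝ) + 1 ≤ m := by exact_mod_cast h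
    linarith

lemma volume_logAnnulus (m : ℕ) :
    volume (logAnnulus m) = ENNReal.ofReal (π * (1 - exp (-2)) * exp (-2 * m)) := by
  have hsub : Metric.closedBall (0 : ℂ) (exp (-m - 1)) ⊆ Metric.ball 0 (exp (-m)) :=
    Metric.closedBall_subset_ball (exp_lt_exp.2 (by linarith))
  rw [logAnnulus, measure_sdiff hsub measurableSet_closedBall.nullMeasurableSet
      measure_closedBall_lt_top.ne, Complex.volume_ball, Complex.volume_closedBall,
    ← ENNReal.ofReal_coe_nnreal, NNReal.coe_real_pi, ← ENNReal.ofReal_pow (exp_nonneg _),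
    ← ENNReal.ofReal_pow (exp_nonneg _), ← ENNReal.ofReal_mul (by positivity),
    ← ENNReal.ofReal_mul (by positivity), ← ENNReal.ofReal_sub _ (by positivity),
    ← exp_nat_mul, ← exp_nat_mul]
  congr 1
  rw [show ((2 : ℕ) : ℝ) * (-m - 1) = -2 * m + -2 by push_cast; ring, exp_add]
  push_cast
  ring_nf

lemma pi_mul_one_sub_exp_neg_two_pos : 0 < π * (1 - exp (-2)) :=
  mul_pos pi_pos (sub_pos.2 (exp_lt_one_iff.2 (by norm_num)))

section LogBox

variable {ι : Type*}

def logBox (k : ι → ℕ) : Set (ι → ℂ) :=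
  univ.pi fun i => logAnnulus (k i)

lemma measurableSet_logBox [Countable ι] (k : ι → ℕ) : MeasurableSet (logBox k) :=
  MeasurableSet.univ_pi fun _ => measurableSet_logAnnulus _

lemma pairwise_disjoint_logBox : Pairwise (Disjoint on (logBox : (ι → ℕ) → Set (ι → ℂ))) := by
  intro k k' hne
  obtain ⟨i, hi⟩ := Function.ne_iff.1 hne
  exact Set.disjoint_univ_pi.2 ⟨i, pairwise_disjoint_logAnnulus hi⟩

lemma volume_logBox [Fintype ι] (k : ι → ℕ) :
    volume (logBox k) = ENNReal.ofReal
      ((π * (1 - exp (-2))) ^ Fintype.card ι * exp (-2 * ∑ i, (k i : ℝ))) := by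
  rw [logBox, volume_pi_pi]
  simp_rw [volume_logAnnulus]
  have := pi_mul_one_sub_exp_neg_two_pos
  rw [← ENNReal.ofReal_prod_of_nonneg fun _ _ => by positivity, Finset.prod_mul_distrib,
    Finset.prod_const, Finset.card_univ, ← exp_sum, Finset.mul_sum]

lemma logBox_subset_ball [Fintype ι] {k : ι → ℕ} {K : ℕ} (hk : ∀ i, K ≤ k i) {ε : ℝ}
    (hε : exp (-K) < ε) : logBox k ⊆ Metric.ball 0 ε := by
  intro z hz
  rw [Metric.mem_ball, dist_pi_lt_iff ((exp_pos _).trans hε)]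
  intro i
  have hKk : (K : ℝ) ≤ k i := by exact_mod_cast hk i
  calc dist (z i) 0 = ‖z i‖ := dist_zero_right _
    _ < exp (-(k i)) := (mem_logAnnulus.1 (hz i trivial)).2
    _ ≤ exp (-K) := exp_le_exp.2 (by linarith)
    _ < ε := hε

lemma exp_div_le_of_mem_logBox [Fintype ι] [Nonempty ι] (p : ℕ) {k : ι → ℕ} {z : ι → ℂ}
    (hz : z ∈ logBox k) :
    exp (2 * ∑ i, (k i : ℝ)) / (∑ i, (k i : ℝ) + Fintype.card ι) ^ p ≤
      1 / (|∑ i, log ‖z i‖| ^ p * ∏ i, ‖z i‖ ^ 2) := by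
  set M := ∑ i, (k i : ℝ)
  have hM : 0 ≤ M := by positivity
  have hlog i := log_norm_mem_Ioo_of_mem_logAnnulus (hz i trivial)
  have hnorm i := mem_logAnnulus.1 (hz i trivial)
  have hsum_lt : ∑ i, log ‖z i‖ < -M := by
    rw [← Finset.sum_neg_distrib]
    exact Finset.sum_lt_sum_of_nonempty Finset.univ_nonempty fun i _ => (hlog i).2
  have hsum_ge : -(M + Fintype.card ι) ≤ ∑ i, log ‖z i‖ := by
    have hsum : ∑ i, (-(k i : ℝ) - 1) = -(M + Fintype.card ι) := by
      simp only [M, Finset.sum_sub_distrib, Finset.sum_neg_distrib, Finset.sum_const,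
        Finset.card_univ, nsmul_eq_mul, mul_one]
      ring
    exact hsum ▸ Finset.sum_le_sum fun i _ => (hlog i).1.le
  have habs : |∑ i, log ‖z i‖| ≤ M + Fintype.card ι :=
    abs_le.2 ⟨hsum_ge, by linarith⟩
  have hprod : ∏ i, ‖z i‖ ^ 2 ≤ exp (-(2 * M)) :=
    calc ∏ i, ‖z i‖ ^ 2 ≤ ∏ i, exp (-(k i : ℝ)) ^ 2 :=
          Finset.prod_le_prod (fun _ _ => by positivity)
            fun i _ => pow_le_pow_left₀ (norm_nonneg _) (hnorm i).2.le 2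
      _ = exp (-(2 * M)) := by
          rw [Finset.prod_pow, ← exp_sum, ← exp_nat_mul, Finset.sum_neg_distrib]
          simp only [M, Finset.mul_sum, Nat.cast_ofNat, mul_neg]
  have hden : 0 < |∑ i, log ‖z i‖| ^ p * ∏ i, ‖z i‖ ^ 2 := by
    refine mul_pos (pow_pos (abs_pos.2 (by linarith)) p) (Finset.prod_pos fun i _ => ?_)
    exact pow_pos ((exp_pos _).trans (hnorm i).1) 2
  calc exp (2 * M) / (M + Fintype.card ι) ^ p
      = 1 / ((M + Fintype.card ι) ^ p * exp (-(2 * M))) := by rw [exp_neg]; field_simp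
    _ ≤ _ := one_div_le_one_div_of_le hden <|
        mul_le_mul (pow_le_pow_left₀ (abs_nonneg _) habs p) hprod (by positivity) (by positivity)

lemma ofReal_div_le_setLIntegral_logBox [Fintype ι] [Nonempty ι] (p : ℕ) (k : ι → ℕ) :
    ENNReal.ofReal ((π * (1 - exp (-2))) ^ Fintype.card ι /
        (∑ i, (k i : ℝ) + Fintype.card ι) ^ p) ≤
      ∫⁻ z in logBox k, ENNReal.ofReal (1 / (|∑ i, log ‖z i‖| ^ p * ∏ i, ‖z i‖ ^ 2)) := by
  set M := ∑ i, (k i : ℝ)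
  calc _ = ENNReal.ofReal (exp (2 * M) / (M + Fintype.card ι) ^ p) * volume (logBox k) := by
        have : exp (-2 * M) = (exp (2 * M))⁻¹ := by rw [← exp_neg, neg_mul]
        rw [volume_logBox, ← ENNReal.ofReal_mul (by positivity), this]
        field_simp
    _ = ∫⁻ _ in logBox k, ENNReal.ofReal (exp (2 * M) / (M + Fintype.card ι) ^ p) :=
        (setLIntegral_const _ _).symm
    _ ≤ _ := setLIntegral_mono' (measurableSet_logBox k) fun z hz =>
        ENNReal.ofReal_le_ofReal (exp_div_le_of_mem_logBox p hz)

end LogBox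

theorem stmt_3_general (n : ℕ) (hn : 1 ≤ n) (ε : ℝ) (hε0 : 0 < ε) :
    ¬ IntegrableOn
      (fun z : Fin n → ℂ =>
        1 / (|∑ i, Real.log ‖z i‖| ^ n * ∏ i, ‖z i‖ ^ 2))
      (Metric.ball 0 ε) := by
  obtain ⟨K, hK⟩ := exists_nat_gt (-log ε)
  have hKε : exp (-K) < ε := by
    simpa [exp_log hε0] using exp_lt_exp.2 (by linarith : -(K : ℝ) < log ε)
  have : Nonempty (Fin n) := ⟨⟨0, hn⟩⟩
  intro hf
  refine hf.lintegral_lt_top.ne (top_unique ?_)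
  calc ∞ = ∑' k : Fin n → ℕ, ENNReal.ofReal ((π * (1 - exp (-2))) ^ n) *
        ENNReal.ofReal (1 / (n * (K + 1) + ∑ i, (k i : ℝ)) ^ n) := by
        rw [ENNReal.tsum_mul_left, tsum_ofReal_one_div_add_sum_pow_eq_top hn
          (mul_pos (Nat.cast_pos.2 hn) (by positivity)),
          ENNReal.mul_top (by simpa using pow_pos pi_mul_one_sub_exp_neg_two_pos n)]
    _ ≤ ∑' k : Fin n → ℕ, ∫⁻ z in logBox (k + fun _ => K),
        ENNReal.ofReal (1 / (|∑ i, log ‖z i‖| ^ n * ∏ i, ‖z i‖ ^ 2)) :=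
        ENNReal.tsum_le_tsum fun k => ?_
    _ = ∫⁻ z in ⋃ k : Fin n → ℕ, logBox (k + fun _ => K),
        ENNReal.ofReal (1 / (|∑ i, log ‖z i‖| ^ n * ∏ i, ‖z i‖ ^ 2)) :=
        (lintegral_iUnion (fun _ => measurableSet_logBox _)
          (pairwise_disjoint_logBox.comp_of_injective (add_left_injective _)) _).symm
    _ ≤ _ := lintegral_mono_set (iUnion_subset fun k =>
        logBox_subset_ball (fun i => Nat.le_add_left K (k i)) hKε)
  convert ofReal_div_le_setLIntegral_logBox n (k + fun _ => K) using 1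
  rw [← ENNReal.ofReal_mul (pow_pos pi_mul_one_sub_exp_neg_two_pos n).le, Fintype.card_fin]
  congr 1
  simp only [Pi.add_apply, Nat.cast_add, Finset.sum_add_distrib, Finset.sum_const,
    Finset.card_univ, Fintype.card_fin, nsmul_eq_mul]
  ring

/-- Lemma 3.1(ii), divergence at `s = n`: the function
`z ↦ 1 / (|∑ i, ln |z_i||^n · ∏ i, |z_i|²)` is not integrable on any small ball in `ℂⁿ`. -/
theorem stmt_3 (n : ℕ) (hn : 1 ≤ n) (ε : ℝ) (hε0 : 0 < ε) (hε1 : ε < 1) :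
    ¬ IntegrableOn
      (fun z : Fin n → ℂ =>
        1 / (|∑ i, Real.log ‖z i‖| ^ n * ∏ i, ‖z i‖ ^ 2))
      (Metric.ball 0 ε) :=
  stmt_3_general n hn ε hε0
end

section
/- Let M be a loopless matroid on a finite nonempty ground set E with rank function rk (so rk S ≥ 1 for every nonempty S ⊆ E). Set m = max{ |S| / rk(S) : ∅ ≠ S ⊆ E }. If S and T are nonempty subsets of E with |S| / rk(S) = m and |T| / rk(T) = m, then |S ∪ T| / rk(S ∪ T) = m. Consequently, the collection of subsets attaining the maximum m has a (unique) maximal element under inclusion. -/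
/-!
Scaling the rank by `m ≥ 0` keeps it submodular, and by maximality of `m` the cardinality, which is
modular, is bounded by `m * rk`. For sets `S`, `T` where the bound is tight,
`|S ∪ T| + |S ∩ T| = m (rk S + rk T) ≥ m (rk (S ∪ T) + rk (S ∩ T))`, so both bounds on `S ∪ T`
and `S ∩ T` are tight. The tight nonempty sets are thus closed under union, and the union of all
of them is the greatest one.
-/

open Finset

lemma SupClosed.exists_isGreatest_of_finite {β : Type*} [SemilatticeSup β] {s : Set β}
    (hs : SupClosed s) (hfin : s.Finite) (hne : s.Nonempty) : ∃ a, IsGreatest s a := by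
  have ht : hfin.toFinset.Nonempty := hfin.toFinset_nonempty.mpr hne
  refine ⟨hfin.toFinset.sup' ht id, ?_, fun b hb => ?_⟩
  · exact hs.finsetSup'_mem ht fun b hb => hfin.mem_toFinset.mp hb
  · exact le_sup' id (hfin.mem_toFinset.mpr hb)

lemma card_union_eq_of_card_eq_of_submodular {α : Type*} [DecidableEq α] {f : Finset α → ℝ}
    (hsub : ∀ S T, f (S ∪ T) + f (S ∩ T) ≤ f S + f T) (hle : ∀ S, (#S : ℝ) ≤ f S)
    {S T : Finset α} (hS : (#S : ℝ) = f S) (hT : (#T : ℝ) = f T) :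
    (#(S ∪ T) : ℝ) = f (S ∪ T) := by
  have hcard : (#(S ∪ T) : ℝ) + #(S ∩ T) = #S + #T := by
    exact_mod_cast card_union_add_card_inter S T
  linarith [hsub S T, hle (S ∪ T), hle (S ∩ T)]

section RankFunction

variable {α : Type*} {rk : Finset α → ℕ}

lemma rk_pos_of_nonempty (hmono : ∀ S T : Finset α, S ⊆ T → rk S ≤ rk T)
    (hloopless : ∀ e : α, rk {e} = 1) {S : Finset α} (hS : S.Nonempty) : (0 : ℝ) < rk S := by
  obtain ⟨e, he⟩ := hS
  have := hmono _ _ (singleton_subset_iff.mpr he)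
  rw [hloopless e] at this
  exact_mod_cast this

lemma card_le_mul_rk_of_isGreatest (h0 : rk ∅ = 0)
    (hmono : ∀ S T : Finset α, S ⊆ T → rk S ≤ rk T) (hloopless : ∀ e : α, rk {e} = 1) {m : ℝ}
    (hm : IsGreatest {r : ℝ | ∃ S : Finset α, S.Nonempty ∧ r = (#S : ℝ) / (rk S : ℝ)} m)
    (S : Finset α) : (#S : ℝ) ≤ m * rk S := by
  rcases S.eq_empty_or_nonempty with rfl | hS
  · simp [h0]
  · rw [← div_le_iff₀ (rk_pos_of_nonempty hmono hloopless hS)]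
    exact hm.2 ⟨S, hS, rfl⟩

lemma nonneg_of_isGreatest_ratio {m : ℝ}
    (hm : IsGreatest {r : ℝ | ∃ S : Finset α, S.Nonempty ∧ r = (#S : ℝ) / (rk S : ℝ)} m) :
    0 ≤ m := by
  obtain ⟨S, -, rfl⟩ := hm.1
  positivity

end RankFunction

theorem stmt_5_general {α : Type*} [Fintype α] [DecidableEq α]
    (rk : Finset α → ℕ)
    (h0 : rk ∅ = 0)
    (hmono : ∀ S T : Finset α, S ⊆ T → rk S ≤ rk T)
    (hsub : ∀ S T : Finset α, rk (S ∪ T) + rk (S ∩ T) ≤ rk S + rk T)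
    (hloopless : ∀ e : α, rk {e} = 1)
    (m : ℝ)
    (hm : IsGreatest {r : ℝ | ∃ S : Finset α, S.Nonempty ∧ r = (S.card : ℝ) / (rk S : ℝ)} m) :
    (∀ S T : Finset α, S.Nonempty → T.Nonempty →
        (S.card : ℝ) / (rk S : ℝ) = m → (T.card : ℝ) / (rk T : ℝ) = m →
        ((S ∪ T).card : ℝ) / (rk (S ∪ T) : ℝ) = m) ∧
      ∃ T₀ : Finset α, T₀.Nonempty ∧ (T₀.card : ℝ) / (rk T₀ : ℝ) = m ∧
        ∀ S : Finset α, S.Nonempty → (S.card : ℝ) / (rk S : ℝ) = m → S ⊆ T₀ := by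
  have hpos : ∀ {S : Finset α}, S.Nonempty → (0 : ℝ) < rk S := rk_pos_of_nonempty hmono hloopless
  have hsub_m : ∀ S T : Finset α, m * rk (S ∪ T) + m * rk (S ∩ T) ≤ m * rk S + m * rk T := by
    intro S T
    rw [← mul_add, ← mul_add]
    exact mul_le_mul_of_nonneg_left (by exact_mod_cast hsub S T) (nonneg_of_isGreatest_ratio hm)
  have hunion : ∀ S T : Finset α, S.Nonempty → T.Nonempty →
      (#S : ℝ) / rk S = m → (#T : ℝ) / rk T = m → (#(S ∪ T) : ℝ) / rk (S ∪ T) = m := by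
    intro S T hS hT hSm hTm
    rw [div_eq_iff (hpos hS).ne'] at hSm
    rw [div_eq_iff (hpos hT).ne'] at hTm
    rw [div_eq_iff (hpos (hS.mono subset_union_left)).ne']
    exact card_union_eq_of_card_eq_of_submodular hsub_m
      (card_le_mul_rk_of_isGreatest h0 hmono hloopless hm) hSm hTm
  refine ⟨hunion, ?_⟩
  have hclosed : SupClosed {S : Finset α | S.Nonempty ∧ (#S : ℝ) / rk S = m} :=
    fun S ⟨hS, hSm⟩ T ⟨hT, hTm⟩ => ⟨hS.mono subset_union_left, hunion S T hS hT hSm hTm⟩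
  obtain ⟨S₀, hS₀, hS₀m⟩ := hm.1
  obtain ⟨T₀, ⟨hT₀, hT₀m⟩, hgreatest⟩ :=
    hclosed.exists_isGreatest_of_finite (Set.toFinite _) ⟨S₀, hS₀, hS₀m.symm⟩
  exact ⟨T₀, hT₀, hT₀m, fun S hS hSm => hgreatest ⟨hS, hSm⟩⟩

/-- Lemma 3.4: for a loopless matroid with rank function `rk` on a finite nonempty ground set,
if `m = max{|S|/rk S : S ≠ ∅}`, then the collection of subsets attaining the maximum is closed
under unions; consequently it has a (unique) maximal element under inclusion. -/
theorem stmt_5 {α : Type*} [Fintype α] [DecidableEq α] [Nonempty α]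
    (rk : Finset α → ℕ)
    (h0 : rk ∅ = 0)
    (hmono : ∀ S T : Finset α, S ⊆ T → rk S ≤ rk T)
    (hsub : ∀ S T : Finset α, rk (S ∪ T) + rk (S ∩ T) ≤ rk S + rk T)
    (hunit : ∀ (S : Finset α) (e : α), rk (insert e S) ≤ rk S + 1)
    (hloopless : ∀ e : α, rk {e} = 1)
    (m : ℝ)
    (hm : IsGreatest {r : ℝ | ∃ S : Finset α, S.Nonempty ∧ r = (S.card : ℝ) / (rk S : ℝ)} m) :
    (∀ S T : Finset α, S.Nonempty → T.Nonempty →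
        (S.card : ℝ) / (rk S : ℝ) = m → (T.card : ℝ) / (rk T : ℝ) = m →
        ((S ∪ T).card : ℝ) / (rk (S ∪ T) : ℝ) = m) ∧
      ∃ T₀ : Finset α, T₀.Nonempty ∧ (T₀.card : ℝ) / (rk T₀ : ℝ) = m ∧
        ∀ S : Finset α, S.Nonempty → (S.card : ℝ) / (rk S : ℝ) = m → S ⊆ T₀ :=
  stmt_5_general rk h0 hmono hsub hloopless m hm
end

section
/- Let M be a loopless matroid on a finite nonempty ground set E with rank function rk. For t ∈ ℝ, say a vector w ∈ ℝ^E lies in t·P(M) if 0 ≤ Σ_{e∈S} w_e ≤ t·rk(S) for every S ⊆ E and Σ_{e∈E} w_e = t·rk(E). Let m = max{ |S| / rk(S) : ∅ ≠ S ⊆ E }. Then: (a) there exists w ∈ m·P(M) with w_e ≥ 1 for all e ∈ E, and (b) for every t ∈ ℝ, if there exists w ∈ t·P(M) with w_e ≥ 1 for all e ∈ E, then t ≥ m. In particular, the infimum c(M) = inf{ t ∈ ℝ : ∃ w ∈ t·P(M) with w_e ≥ 1 for all e } equals m and is attained. -/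
/-!
Let `f = m · rk`, a submodular set function with `f ∅ = 0`. Maximality of `m` says exactly that
the all-ones vector lies in the submodular polyhedron `P(f) = {x | x(S) ≤ f(S) for all S}`, and
every point of `P(f)` lies below a point of `P(f)` with `x(E) = f(E)`: raise the coordinates one at
a time until each lies in a tight set. Tight sets stay tight, and by submodularity a union of tight
sets is tight, so in the end `E` itself is tight. Conversely, summing `w ≥ 1` over a set `S`
attaining `m` gives `|S| ≤ t · rk S`, i.e. `m ≤ t`.
-/

open Finset

section SubmodularPolyhedron

variable {α : Type*} {f : Finset α → ℝ} {x y : α → ℝ}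

variable (f) in
def submodularPolyhedron : Set (α → ℝ) :=
  {x | ∀ S, ∑ e ∈ S, x e ≤ f S}

variable (f) in
def IsTight (x : α → ℝ) (S : Finset α) : Prop :=
  ∑ e ∈ S, x e = f S

theorem IsTight.union [DecidableEq α] (hf : ∀ S T, f (S ∪ T) + f (S ∩ T) ≤ f S + f T)
    (hx : x ∈ submodularPolyhedron f) {S T : Finset α} (hS : IsTight f x S)
    (hT : IsTight f x T) : IsTight f x (S ∪ T) := by
  have hsum := sum_union_inter (s₁ := S) (s₂ := T) (f := x)
  unfold IsTight at *
  linarith [hx (S ∪ T), hx (S ∩ T), hf S T]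

theorem IsTight.of_le (hxy : x ≤ y) (hy : y ∈ submodularPolyhedron f) {S : Finset α}
    (hS : IsTight f x S) : IsTight f y S :=
  le_antisymm (hy S) (hS ▸ sum_le_sum fun e _ => hxy e)

theorem isTight_sup [DecidableEq α] (hf : ∀ S T, f (S ∪ T) + f (S ∩ T) ≤ f S + f T)
    (hf₀ : f ∅ = 0) (hx : x ∈ submodularPolyhedron f) {ι : Type*} (s : Finset ι)
    (S : ι → Finset α) (hS : ∀ i ∈ s, IsTight f x (S i)) : IsTight f x (s.sup S) :=
  sup_induction (p := IsTight f x) (by simp [IsTight, hf₀])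
    (fun _ h₁ _ h₂ => h₁.union hf hx h₂) hS

/-- Raise `x e` by the least slack `f S - x(S)` over the sets `S ∋ e`. -/
theorem exists_le_isTight_mem [Fintype α] [DecidableEq α] (hx : x ∈ submodularPolyhedron f)
    (e : α) :
    ∃ y ∈ submodularPolyhedron f, x ≤ y ∧ ∃ S, e ∈ S ∧ IsTight f y S := by
  obtain ⟨S₀, hS₀, hmin⟩ := exists_min_image (univ.filter (e ∈ ·))
    (fun S => f S - ∑ i ∈ S, x i) ⟨{e}, by simp⟩
  set c := f S₀ - ∑ i ∈ S₀, x i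
  have hsum (S : Finset α) :
      ∑ i ∈ S, (x + Pi.single e c : α → ℝ) i = ∑ i ∈ S, x i + if e ∈ S then c else 0 := by
    simp only [Pi.add_apply, sum_add_distrib, sum_pi_single']
  have heS₀ : e ∈ S₀ := (mem_filter.1 hS₀).2
  refine ⟨x + Pi.single e c, fun S => ?_,
    le_add_of_nonneg_right (Pi.single_nonneg.2 (sub_nonneg.2 (hx S₀))), S₀, heS₀, ?_⟩
  · rw [hsum]
    split_ifs with heS
    · linarith [hmin S (mem_filter.2 ⟨mem_univ S, heS⟩)]
    · simpa using hx S
  · simp only [IsTight, hsum, heS₀, if_true, c]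
    ring

theorem exists_le_forall_mem_isTight [Fintype α] [DecidableEq α]
    (hx : x ∈ submodularPolyhedron f) (F : Finset α) :
    ∃ y ∈ submodularPolyhedron f, x ≤ y ∧ ∀ e ∈ F, ∃ S, e ∈ S ∧ IsTight f y S := by
  induction F using Finset.induction_on with
  | empty => exact ⟨x, hx, le_rfl, by simp⟩
  | insert a F _ ih =>
    obtain ⟨y, hy, hxy, hF⟩ := ih
    obtain ⟨z, hz, hyz, S, haS, hS⟩ := exists_le_isTight_mem hy a
    refine ⟨z, hz, hxy.trans hyz, ?_⟩
    simp only [mem_insert, forall_eq_or_imp]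
    exact ⟨⟨S, haS, hS⟩, fun e he => (hF e he).imp fun _ hT => ⟨hT.1, hT.2.of_le hyz hz⟩⟩

theorem exists_le_sum_univ_eq [Fintype α] [DecidableEq α]
    (hf : ∀ S T, f (S ∪ T) + f (S ∩ T) ≤ f S + f T) (hf₀ : f ∅ = 0)
    (hx : x ∈ submodularPolyhedron f) :
    ∃ y ∈ submodularPolyhedron f, x ≤ y ∧ ∑ e, y e = f univ := by
  obtain ⟨y, hy, hxy, htight⟩ := exists_le_forall_mem_isTight hx univ
  choose S hmem hS using fun e => htight e (mem_univ e)
  have hsup : univ.sup S = univ := eq_univ_of_forall fun e => mem_sup.2 ⟨e, mem_univ e, hmem e⟩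
  refine ⟨y, hy, hxy, ?_⟩
  simpa only [IsTight, hsup] using isTight_sup hf hf₀ hy univ S fun e _ => hS e

end SubmodularPolyhedron

theorem stmt_6_general {α : Type*} [Fintype α] [DecidableEq α]
    (rk : Finset α → ℕ)
    (h0 : rk ∅ = 0)
    (hmono : ∀ S T : Finset α, S ⊆ T → rk S ≤ rk T)
    (hsub : ∀ S T : Finset α, rk (S ∪ T) + rk (S ∩ T) ≤ rk S + rk T)
    (hloopless : ∀ e : α, rk {e} = 1)
    (m : ℝ)
    (hm : IsGreatest {r : ℝ | ∃ S : Finset α, S.Nonempty ∧ r = (S.card : ℝ) / (rk S : ℝ)} m) :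
    IsLeast { t : ℝ | ∃ w : α → ℝ, (∀ e : α, 1 ≤ w e) ∧
        (∀ S : Finset α, 0 ≤ ∑ e ∈ S, w e ∧ ∑ e ∈ S, w e ≤ t * (rk S : ℝ)) ∧
        (∑ e : α, w e = t * (rk Finset.univ : ℝ)) } m := by
  have hrk_pos (S : Finset α) (hS : S.Nonempty) : (0 : ℝ) < rk S := by
    obtain ⟨e, he⟩ := hS
    have := hmono _ _ (singleton_subset_iff.2 he)
    rw [hloopless] at this
    exact_mod_cast this
  have hm_nonneg : 0 ≤ m := by
    obtain ⟨S, -, rfl⟩ := hm.1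
    positivity
  have hone : (1 : α → ℝ) ∈ submodularPolyhedron fun S => m * rk S := fun S => by
    obtain rfl | hS := S.eq_empty_or_nonempty
    · simp [h0]
    · simpa using (div_le_iff₀ (hrk_pos S hS)).1 (hm.2 ⟨S, hS, rfl⟩)
  have hsub_m (S T : Finset α) : m * rk (S ∪ T) + m * rk (S ∩ T) ≤ m * rk S + m * rk T := by
    simp only [← mul_add]
    exact mul_le_mul_of_nonneg_left (by exact_mod_cast hsub S T) hm_nonneg
  refine ⟨?_, ?_⟩
  · obtain ⟨w, hw, hle, hsum⟩ := exists_le_sum_univ_eq hsub_m (by simp [h0]) hone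
    exact ⟨w, hle, fun S => ⟨sum_nonneg fun e _ => zero_le_one.trans (hle e), hw S⟩, hsum⟩
  · rintro t ⟨w, hw₁, hw, -⟩
    obtain ⟨S, hS, rfl⟩ := hm.1
    rw [div_le_iff₀ (hrk_pos S hS)]
    calc (S.card : ℝ) = ∑ _e ∈ S, 1 := by simp
      _ ≤ ∑ e ∈ S, w e := sum_le_sum fun e _ => hw₁ e
      _ ≤ t * rk S := (hw S).2

/-- Proposition 3.5: for a loopless matroid with rank function `rk` on a finite nonempty ground
set, with `m = max{|S|/rk S : S ≠ ∅}`, the number `m` is the least `t` such that the dilated base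
polytope `t·P(M)` contains a vector `w` with all coordinates `≥ 1`; moreover this least value is
attained. -/
theorem stmt_6 {α : Type*} [Fintype α] [DecidableEq α] [Nonempty α]
    (rk : Finset α → ℕ)
    (h0 : rk ∅ = 0)
    (hmono : ∀ S T : Finset α, S ⊆ T → rk S ≤ rk T)
    (hsub : ∀ S T : Finset α, rk (S ∪ T) + rk (S ∩ T) ≤ rk S + rk T)
    (hunit : ∀ (S : Finset α) (e : α), rk (insert e S) ≤ rk S + 1)
    (hloopless : ∀ e : α, rk {e} = 1)
    (m : ℝ)
    (hm : IsGreatest {r : ℝ | ∃ S : Finset α, S.Nonempty ∧ r = (S.card : ℝ) / (rk S : ℝ)} m) :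
    IsLeast { t : ℝ | ∃ w : α → ℝ, (∀ e : α, 1 ≤ w e) ∧
        (∀ S : Finset α, 0 ≤ ∑ e ∈ S, w e ∧ ∑ e ∈ S, w e ≤ t * (rk S : ℝ)) ∧
        (∑ e : α, w e = t * (rk Finset.univ : ℝ)) } m :=
  stmt_6_general rk h0 hmono hsub hloopless m hm
end

section
/- Let M be a loopless matroid on a finite nonempty ground set E with rank function rk. Define c(M) = inf{ t ∈ ℝ : there exists w ∈ ℝ^E with w_e ≥ 1 for all e ∈ E, 0 ≤ Σ_{e∈S} w_e ≤ t·rk(S) for all S ⊆ E, and Σ_{e∈E} w_e = t·rk(E) }, and define c(M|_T) analogously for the restriction of M to a subset T ⊆ E (whose rank function is rk restricted to subsets of T). Then there exists a nonempty subset T ⊆ E such that c(M) = c(M|_T) = |T| / rk(T). -/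
/-- The constant `c(M|_T)` of the restriction of a matroid with rank function `rk` to a subset
`T` of the ground set: the infimum of `t` such that the dilated base polytope `t·P(M|_T)`
contains a vector with all coordinates (indexed by `T`) at least `1`. -/
noncomputable def cRes {α : Type*} [Fintype α] (rk : Finset α → ℕ) (T : Finset α) : ℝ :=
  sInf { t : ℝ | ∃ w : α → ℝ, (∀ e ∈ T, 1 ≤ w e) ∧
    (∀ S : Finset α, S ⊆ T → 0 ≤ ∑ e ∈ S, w e ∧ ∑ e ∈ S, w e ≤ t * (rk S : ℝ)) ∧
    (∑ e ∈ T, w e = t * (rk T : ℝ)) }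

open Finset in
/-- Key feasibility lemma: if `t` dominates all the ratios `|S|/rk S`, then the dilated base
polytope `t·P(M)` contains a vector all of whose coordinates are at least `1`. -/
private lemma key_lemma {α : Type*} [DecidableEq α] :
    ∀ (n : ℕ) (E : Finset α), E.card ≤ n → E.Nonempty →
    ∀ rk : Finset α → ℕ,
    (∀ S T : Finset α, S ⊆ T → T ⊆ E → rk S ≤ rk T) →
    (∀ S T : Finset α, S ⊆ E → T ⊆ E → rk (S ∪ T) + rk (S ∩ T) ≤ rk S + rk T) →
    ∀ t : ℝ, (∀ S ⊆ E, (S.card : ℝ) ≤ t * (rk S : ℝ)) →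
    ∃ w : α → ℝ, (∀ e ∈ E, 1 ≤ w e) ∧ (∀ S ⊆ E, ∑ e ∈ S, w e ≤ t * (rk S : ℝ)) ∧
      (∑ e ∈ E, w e = t * (rk E : ℝ)) := by
  intro n
  induction n with
  | zero =>
    intro E hcard hne
    have := hne.card_pos
    omega
  | succ n ih =>
    intro E hcard hne rk hmono hsub t ht
    -- basic positivity facts
    have hrk1 : ∀ S : Finset α, S ⊆ E → S.Nonempty → 1 ≤ rk S := by
      intro S hSE hSne
      obtain ⟨e, he⟩ := hSne
      have h1 : ({e} : Finset α) ⊆ S := singleton_subset_iff.2 he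
      have h2 := hmono {e} S h1 hSE
      have h3 := ht {e} (h1.trans hSE)
      by_contra h
      push_neg at h
      have hS0 : rk S = 0 := by omega
      have he0 : rk {e} = 0 := by omega
      rw [he0] at h3
      norm_num at h3
    have htpos : 0 < t := by
      obtain ⟨e, he⟩ := hne
      have h1 : ({e} : Finset α) ⊆ E := singleton_subset_iff.2 he
      have h3 := ht {e} h1
      simp only [card_singleton, Nat.cast_one] at h3
      by_contra h
      push_neg at h
      have : t * ((rk {e} : ℕ) : ℝ) ≤ 0 :=
        mul_nonpos_of_nonpos_of_nonneg h (by positivity)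
      linarith
    -- choose a ratio-maximizing subset T0
    obtain ⟨T0, hT0mem, hT0max⟩ :=
      (E.powerset.filter (fun S : Finset α => S.Nonempty)).exists_max_image
        (fun S => (S.card : ℝ) / ((rk S : ℕ) : ℝ)) ⟨E, by simp [hne]⟩
    simp only [mem_filter, mem_powerset] at hT0mem
    obtain ⟨hT0sub, hT0ne⟩ := hT0mem
    have hrkT0pos : (0 : ℝ) < (rk T0 : ℝ) := by
      have := hrk1 T0 hT0sub hT0ne
      exact_mod_cast Nat.lt_of_lt_of_le Nat.zero_lt_one this
    have hcT0pos : (0 : ℝ) < (T0.card : ℝ) := by exact_mod_cast hT0ne.card_pos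
    have hmax' : ∀ S ⊆ E, (S.card : ℝ) * (rk T0 : ℝ) ≤ (T0.card : ℝ) * (rk S : ℝ) := by
      intro S hSE
      rcases S.eq_empty_or_nonempty with rfl | hSne
      · simp
        positivity
      · have h := hT0max S (by simp [hSE, hSne])
        have hrkS : (0 : ℝ) < (rk S : ℝ) := by
          have := hrk1 S hSE hSne
          exact_mod_cast Nat.lt_of_lt_of_le Nat.zero_lt_one this
        rw [div_le_div_iff₀ hrkS hrkT0pos] at h
        exact h
    have hT0card : (T0.card : ℝ) ≤ t * (rk T0 : ℝ) := ht T0 hT0sub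
    have hone : 1 ≤ t * (rk T0 : ℝ) / (T0.card : ℝ) := by
      rw [le_div_iff₀ hcT0pos]
      linarith
    by_cases hET0 : E ⊆ T0
    · -- the maximizer is all of E: constant vector works
      have hEc : (0 : ℝ) < (E.card : ℝ) := by exact_mod_cast hne.card_pos
      refine ⟨fun _ => t * (rk E : ℝ) / (E.card : ℝ), ?_, ?_, ?_⟩
      · intro e he
        have hE0 : T0 = E := Subset.antisymm hT0sub hET0
        rw [← hE0]
        exact hone
      · intro S hSE
        rw [sum_const, nsmul_eq_mul, mul_div_assoc', div_le_iff₀ hEc]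
        have hE0 : T0 = E := Subset.antisymm hT0sub hET0
        have hm := hmax' S hSE
        rw [hE0] at hm
        nlinarith [mul_le_mul_of_nonneg_left hm htpos.le]
      · rw [sum_const, nsmul_eq_mul]
        field_simp
    · -- recurse on the contraction by T0
      set E' := E \ T0 with hE'
      have hE'ne : E'.Nonempty := sdiff_nonempty.2 hET0
      have hE'card : E'.card ≤ n := by
        have h1 : E'.card = E.card - T0.card := card_sdiff_of_subset hT0sub
        have h2 := hT0ne.card_pos
        omega
      set rk' : Finset α → ℕ := fun S => rk (S ∪ T0) - rk T0 with hrk'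
      have hsubE' : E' ⊆ E := sdiff_subset
      have hUsub : ∀ S ⊆ E', S ∪ T0 ⊆ E := fun S hS =>
        union_subset (hS.trans hsubE') hT0sub
      have hrkle : ∀ S ⊆ E', rk T0 ≤ rk (S ∪ T0) := fun S hS =>
        hmono T0 (S ∪ T0) subset_union_right (hUsub S hS)
      have hcast : ∀ S ⊆ E', ((rk' S : ℕ) : ℝ) = (rk (S ∪ T0) : ℝ) - (rk T0 : ℝ) := by
        intro S hS
        simp only [hrk']
        rw [Nat.cast_sub (hrkle S hS)]
      have hmono' : ∀ S T : Finset α, S ⊆ T → T ⊆ E' → rk' S ≤ rk' T := by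
        intro S T hST hTE'
        exact Nat.sub_le_sub_right
          (hmono _ _ (union_subset_union_left hST) (hUsub T hTE')) _
      have hsub' : ∀ S T : Finset α, S ⊆ E' → T ⊆ E' →
          rk' (S ∪ T) + rk' (S ∩ T) ≤ rk' S + rk' T := by
        intro S T hS hT
        have h1 := hsub (S ∪ T0) (T ∪ T0) (hUsub S hS) (hUsub T hT)
        have e1 : (S ∪ T0) ∪ (T ∪ T0) = (S ∪ T) ∪ T0 := by ext x; simp; tauto
        have e2 : (S ∪ T0) ∩ (T ∪ T0) = (S ∩ T) ∪ T0 := by ext x; simp; tauto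
        rw [e1, e2] at h1
        have h2 := hrkle S hS
        have h3 := hrkle T hT
        have h4 := hrkle (S ∪ T) (union_subset hS hT)
        have h5 := hrkle (S ∩ T) (inter_subset_left.trans hS)
        simp only [hrk']
        omega
      have ht' : ∀ S ⊆ E', (S.card : ℝ) ≤ t * ((rk' S : ℕ) : ℝ) := by
        intro S hS
        rcases S.eq_empty_or_nonempty with rfl | hSne
        · simp [hrk']
        · have hd : Disjoint S T0 := Finset.disjoint_left.2 fun a ha =>
            (mem_sdiff.1 (hS ha)).2
          have hcardU : ((S ∪ T0).card : ℝ) = (S.card : ℝ) + (T0.card : ℝ) := by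
            exact_mod_cast card_union_of_disjoint hd
          have hm := hmax' (S ∪ T0) (hUsub S hS)
          rw [hcast S hS]
          have hge : (rk T0 : ℝ) ≤ (rk (S ∪ T0) : ℝ) := by exact_mod_cast hrkle S hS
          nlinarith [hm, hcardU, hT0card, hrkT0pos, hge,
            mul_le_mul_of_nonneg_right hT0card (sub_nonneg.2 hge),
            (Nat.cast_nonneg S.card : (0 : ℝ) ≤ (S.card : ℝ))]
      obtain ⟨w', hw'1, hw'2, hw'3⟩ := ih E' hE'card hE'ne rk' hmono' hsub' t ht'
      have hsum : ∀ S ⊆ E, (∑ e ∈ S,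
            (if e ∈ T0 then t * (rk T0 : ℝ) / (T0.card : ℝ) else w' e))
          = ((S ∩ T0).card : ℝ) * (t * (rk T0 : ℝ) / (T0.card : ℝ)) + ∑ e ∈ S \ T0, w' e := by
        intro S hS
        rw [← Finset.sum_inter_add_sum_sdiff S T0
          (fun e => if e ∈ T0 then t * (rk T0 : ℝ) / (T0.card : ℝ) else w' e)]
        congr 1
        · rw [Finset.sum_congr rfl (fun e he => if_pos (mem_inter.1 he).2), sum_const,
            nsmul_eq_mul]
        · exact Finset.sum_congr rfl (fun e he => if_neg (mem_sdiff.1 he).2)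
      refine ⟨fun e => if e ∈ T0 then t * (rk T0 : ℝ) / (T0.card : ℝ) else w' e, ?_, ?_, ?_⟩
      · intro e he
        by_cases h : e ∈ T0
        · simpa [h] using hone
        · simpa [h] using hw'1 e (mem_sdiff.2 ⟨he, h⟩)
      · intro S hS
        rw [hsum S hS]
        have hSd : S \ T0 ⊆ E' := sdiff_subset_sdiff hS (Subset.refl _)
        have h1 : ((S ∩ T0).card : ℝ) * (t * (rk T0 : ℝ) / (T0.card : ℝ))
            ≤ t * (rk (S ∩ T0) : ℝ) := by
          have hm := hmax' (S ∩ T0) (inter_subset_left.trans hS)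
          rw [mul_div_assoc', div_le_iff₀ hcT0pos]
          nlinarith [mul_le_mul_of_nonneg_left hm htpos.le]
        have h2 : ∑ e ∈ S \ T0, w' e ≤ t * ((rk (S ∪ T0) : ℝ) - (rk T0 : ℝ)) := by
          have h := hw'2 (S \ T0) hSd
          rw [hcast _ hSd, sdiff_union_self_eq_union] at h
          exact h
        have h3 : (rk (S ∪ T0) : ℝ) + (rk (S ∩ T0) : ℝ) ≤ (rk S : ℝ) + (rk T0 : ℝ) := by
          exact_mod_cast hsub S T0 hS hT0sub
        nlinarith [h1, h2, mul_le_mul_of_nonneg_left h3 htpos.le]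
      · rw [hsum E (Subset.refl E)]
        have e1 : E ∩ T0 = T0 := inter_eq_right.2 hT0sub
        have e3 : E' ∪ T0 = E := sdiff_union_of_subset hT0sub
        have h4 : ∑ e ∈ E \ T0, w' e = t * ((rk E : ℝ) - (rk T0 : ℝ)) := by
          have := hw'3
          rw [hcast E' (Subset.refl E'), e3] at this
          exact this
        rw [e1, h4]
        have h5 : (T0.card : ℝ) * (t * (rk T0 : ℝ) / (T0.card : ℝ)) = t * (rk T0 : ℝ) := by
          field_simp
        rw [h5]
        ring

/-- Proposition 3.6: for a loopless matroid `M` with rank function `rk` on a finite nonempty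
ground set, there is a nonempty subset `T` of the ground set with
`c(M) = c(M|_T) = |T| / rk T`. -/
theorem stmt_7 {α : Type*} [Fintype α] [DecidableEq α] [Nonempty α]
    (rk : Finset α → ℕ)
    (h0 : rk ∅ = 0)
    (hmono : ∀ S T : Finset α, S ⊆ T → rk S ≤ rk T)
    (hsub : ∀ S T : Finset α, rk (S ∪ T) + rk (S ∩ T) ≤ rk S + rk T)
    (hunit : ∀ (S : Finset α) (e : α), rk (insert e S) ≤ rk S + 1)
    (hloopless : ∀ e : α, rk {e} = 1) :
    ∃ T : Finset α, T.Nonempty ∧ cRes rk Finset.univ = cRes rk T ∧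
      cRes rk T = (T.card : ℝ) / (rk T : ℝ) := by
  classical
  have hrkpos : ∀ S : Finset α, S.Nonempty → (0 : ℝ) < (rk S : ℝ) := by
    intro S hS
    obtain ⟨e, he⟩ := hS
    have h1 := hmono {e} S (Finset.singleton_subset_iff.2 he)
    rw [hloopless e] at h1
    exact_mod_cast Nat.lt_of_lt_of_le Nat.zero_lt_one h1
  obtain ⟨T, hTmem, hTmax⟩ :=
    ((Finset.univ : Finset α).powerset.filter (fun S : Finset α => S.Nonempty)).exists_max_image
      (fun S => (S.card : ℝ) / ((rk S : ℕ) : ℝ))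
      ⟨Finset.univ, by simp [Finset.univ_nonempty]⟩
  simp only [Finset.mem_filter, Finset.mem_powerset] at hTmem
  have hTne : T.Nonempty := hTmem.2
  have hrkT : (0 : ℝ) < (rk T : ℝ) := hrkpos T hTne
  have hcond : ∀ t : ℝ, (T.card : ℝ) / (rk T : ℝ) ≤ t →
      ∀ S : Finset α, (S.card : ℝ) ≤ t * (rk S : ℝ) := by
    intro t htmem S
    rcases S.eq_empty_or_nonempty with rfl | hSne
    · have ht0 : (0 : ℝ) ≤ t := le_trans (by positivity) htmem
      simpa using mul_nonneg ht0 (Nat.cast_nonneg _)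
    · have h1 := hTmax S (by simp [hSne])
      have hrkS := hrkpos S hSne
      rw [div_le_div_iff₀ hrkS hrkT] at h1
      have h2 : (T.card : ℝ) ≤ t * (rk T : ℝ) := (div_le_iff₀ hrkT).1 htmem
      nlinarith [mul_le_mul_of_nonneg_right h2 hrkS.le]
  have main : ∀ T' : Finset α, T'.Nonempty → T ⊆ T' →
      cRes rk T' = (T.card : ℝ) / (rk T : ℝ) := by
    intro T' hT'ne hTsub
    have hset : { t : ℝ | ∃ w : α → ℝ, (∀ e ∈ T', 1 ≤ w e) ∧
        (∀ S : Finset α, S ⊆ T' → 0 ≤ ∑ e ∈ S, w e ∧ ∑ e ∈ S, w e ≤ t * (rk S : ℝ)) ∧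
        (∑ e ∈ T', w e = t * (rk T' : ℝ)) } = Set.Ici ((T.card : ℝ) / (rk T : ℝ)) := by
      ext t
      constructor
      · rintro ⟨w, hw1, hw2, hw3⟩
        have hl : (T.card : ℝ) ≤ ∑ e ∈ T, w e := by
          calc (T.card : ℝ) = ∑ _e ∈ T, (1 : ℝ) := by simp
          _ ≤ ∑ e ∈ T, w e := Finset.sum_le_sum (fun e he => hw1 e (hTsub he))
        have hu := (hw2 T hTsub).2
        rw [Set.mem_Ici, div_le_iff₀ hrkT]
        linarith
      · intro htmem
        rw [Set.mem_Ici] at htmem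
        obtain ⟨w, hw1, hw2, hw3⟩ := key_lemma T'.card T' le_rfl hT'ne rk
          (fun S U hSU _ => hmono S U hSU) (fun S U _ _ => hsub S U) t
          (fun S _ => hcond t htmem S)
        exact ⟨w, hw1, fun S hS =>
          ⟨Finset.sum_nonneg (fun e he => le_trans zero_le_one (hw1 e (hS he))), hw2 S hS⟩,
          hw3⟩
    rw [cRes, hset, csInf_Ici]
  refine ⟨T, hTne, ?_, main T hTne (Finset.Subset.refl T)⟩
  rw [main Finset.univ Finset.univ_nonempty (Finset.subset_univ T),
    main T hTne (Finset.Subset.refl T)]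
end

section
/- Let M be a loopless matroid on a finite nonempty ground set E with set of bases ℬ, and let ψ_M(x) = Σ_{B∈ℬ} ∏_{e∈B} x_e be its basis generating polynomial. Suppose (c_B)_{B∈ℬ} are nonnegative real numbers with Σ_{B∈ℬ} c_B·χ_B ≥ 𝟙 componentwise, and set s = Σ_{B∈ℬ} c_B. Then for every x ∈ ℝ^E with x_e ≥ 1 for all e, one has ψ_M(x)^s ≥ ∏_{e∈E} x_e (real exponentiation). -/
/-- The key inequality in the proof of Lemma 3.2(i): for a loopless matroid on a finite nonempty
ground set with set of bases `ℬ`, if the nonnegative reals `(c_B)` satisfy `Σ_B c_B·χ_B ≥ 𝟙`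
componentwise and `s = Σ_B c_B`, then `ψ_M(x)^s ≥ ∏_e x_e` whenever all `x_e ≥ 1`. -/
theorem stmt_9 {α : Type*} [Fintype α] [DecidableEq α] [Nonempty α]
    (ℬ : Finset (Finset α)) (hne : ℬ.Nonempty)
    (r : ℕ) (hr : 1 ≤ r)
    (hcard : ∀ B ∈ ℬ, B.card = r)
    (hexch : ∀ B₁ ∈ ℬ, ∀ B₂ ∈ ℬ, ∀ e ∈ B₁ \ B₂,
      ∃ f ∈ B₂ \ B₁, insert f (B₁.erase e) ∈ ℬ)
    (hloopless : ∀ e : α, ∃ B ∈ ℬ, e ∈ B)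
    (c : Finset α → ℝ) (hc : ∀ B ∈ ℬ, 0 ≤ c B)
    (hcover : ∀ e : α, 1 ≤ ∑ B ∈ ℬ, c B * (if e ∈ B then 1 else 0))
    (s : ℝ) (hs : s = ∑ B ∈ ℬ, c B)
    (x : α → ℝ) (hx : ∀ e : α, 1 ≤ x e) :
    ∏ e : α, x e ≤ (∑ B ∈ ℬ, ∏ e ∈ B, x e) ^ s := by
  set ψ := ∑ B ∈ ℬ, ∏ e ∈ B, x e with hψ
  have hx0 : ∀ e, (0:ℝ) < x e := fun e => lt_of_lt_of_le one_pos (hx e)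
  have hterm1 : ∀ B ∈ ℬ, (1:ℝ) ≤ ∏ e ∈ B, x e := by
    intro B _
    calc (1:ℝ) = ∏ e ∈ B, 1 := by simp
    _ ≤ _ := Finset.prod_le_prod (fun _ _ => zero_le_one) (fun e _ => hx e)
  have hψpos : (0:ℝ) < ψ := by
    obtain ⟨B, hB⟩ := hne
    exact lt_of_lt_of_le one_pos <| le_trans (hterm1 B hB) <|
      Finset.single_le_sum (fun B hB => le_trans zero_le_one (hterm1 B hB)) hB
  have hle : ∀ B ∈ ℬ, ∏ e ∈ B, x e ≤ ψ := fun B hB =>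
    Finset.single_le_sum (fun B hB => le_trans zero_le_one (hterm1 B hB)) hB
  -- Step 1: ∏ x e ≤ ∏ x e ^ (Σ_B c_B • χ_B(e))
  have step1 : ∏ e : α, x e ≤ ∏ e : α, (x e) ^ (∑ B ∈ ℬ, c B * (if e ∈ B then 1 else 0)) := by
    apply Finset.prod_le_prod (fun e _ => le_of_lt (hx0 e))
    intro e _
    calc x e = x e ^ (1:ℝ) := (Real.rpow_one _).symm
    _ ≤ _ := Real.rpow_le_rpow_of_exponent_le (hx e) (hcover e)
  -- Step 2: rewrite as double product, swap
  have step2 : ∏ e : α, (x e) ^ (∑ B ∈ ℬ, c B * (if e ∈ B then 1 else 0))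
      = ∏ B ∈ ℬ, (∏ e ∈ B, x e) ^ (c B) := by
    have : ∀ e : α, (x e) ^ (∑ B ∈ ℬ, c B * (if e ∈ B then 1 else 0))
        = ∏ B ∈ ℬ, (x e) ^ (c B * (if e ∈ B then 1 else 0)) := fun e =>
      Real.rpow_sum_of_pos (hx0 e) _ _
    rw [Finset.prod_congr rfl fun e _ => this e, Finset.prod_comm]
    apply Finset.prod_congr rfl
    intro B hB
    rw [← Real.finset_prod_rpow _ _ (fun e _ => le_of_lt (hx0 e)),
      ← Finset.prod_subset (Finset.subset_univ B)]
    · exact Finset.prod_congr rfl fun e he => by simp [he]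
    · intro e _ he
      simp [he]
  -- Step 3: bound by ψ powers
  have step3 : ∏ B ∈ ℬ, (∏ e ∈ B, x e) ^ (c B) ≤ ∏ B ∈ ℬ, ψ ^ (c B) := by
    apply Finset.prod_le_prod
    · intro B hB
      exact Real.rpow_nonneg (le_trans zero_le_one (hterm1 B hB)) _
    · intro B hB
      exact Real.rpow_le_rpow (le_trans zero_le_one (hterm1 B hB)) (hle B hB) (hc B hB)
  have step4 : ∏ B ∈ ℬ, ψ ^ (c B) = ψ ^ s := by
    rw [hs, Real.rpow_sum_of_pos hψpos]
  calc ∏ e : α, x e ≤ _ := step1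
  _ = _ := step2
  _ ≤ _ := step3
  _ = _ := step4
end

section
/- Let M be a loopless matroid on a finite nonempty ground set E (with |E| = n) with set of bases ℬ, all of cardinality r = rk(E) ≥ 1, and basis generating polynomial ψ_M(x) = Σ_{B∈ℬ} ∏_{e∈B} x_e. Then for s = n / r and every ε with 0 < ε < 1, the function z ↦ 1 / ( ψ_M( (-ln|z_e|)_{e∈E} )^s · ∏_{e∈E} |z_e|^2 ) is NOT integrable (with respect to Lebesgue measure on ℂ^E) on the ball { z ∈ ℂ^E : ‖z‖ < ε }. -/
/-!
Write `u_e = -log ‖z_e‖`. On the product `expBox m` of the annuli `m_e < u_e ≤ m_e + 1`, every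
monomial of `ψ` is at most `T ^ r` with `T = ∑ (m_e + 1)`, so `ψ(u) ^ s ≤ |ℬ| ^ s T ^ n` since
`r s = n`, while `∏ ‖z_e‖²` is bounded by a constant multiple of the volume of the box. Hence the
integral over `expBox m` is at least a constant times `T⁻ⁿ`. The dyadic cube `[2^j, 2^(j+1))ⁿ` has
`2^(jn)` lattice points, each with `T ≤ n 2^(j+1)`, so the corresponding shell contributes at least
a positive constant independent of `j`. These shells are disjoint and lie in the ball for large
`j`, so the integral over the ball is infinite.
-/

open MeasureTheory Metric Finset Real Function

def expAnnulus (k : ℕ) : Set ℂ :=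
  ball 0 (exp (-k)) \ ball 0 (exp (-(k + 1)))

lemma mem_expAnnulus {k : ℕ} {w : ℂ} :
    w ∈ expAnnulus k ↔ exp (-(k + 1)) ≤ ‖w‖ ∧ ‖w‖ < exp (-k) := by
  simp [expAnnulus, and_comm]

lemma measurableSet_expAnnulus (k : ℕ) : MeasurableSet (expAnnulus k) :=
  measurableSet_ball.diff measurableSet_ball

lemma pairwise_disjoint_expAnnulus : Pairwise (Disjoint on expAnnulus) := by
  refine (pairwise_disjoint_on _).2 fun k l hkl => Set.disjoint_left.2 fun w hk hl => ?_
  rw [mem_expAnnulus] at hk hl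
  have : exp (-(l : ℝ)) ≤ exp (-(k + 1)) := exp_le_exp.2 (neg_le_neg (by exact_mod_cast hkl))
  linarith [hk.1, hl.2]

lemma neg_log_norm_mem_of_mem_expAnnulus {k : ℕ} {w : ℂ} (hw : w ∈ expAnnulus k) :
    (k : ℝ) < -log ‖w‖ ∧ -log ‖w‖ ≤ k + 1 := by
  rw [mem_expAnnulus] at hw
  have hpos : 0 < ‖w‖ := (exp_pos _).trans_le hw.1
  constructor
  · linarith [(log_lt_iff_lt_exp hpos).2 hw.2]
  · linarith [(le_log_iff_exp_le hpos).2 hw.1]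

-- `π (1 - e⁻²)` is the area of `expAnnulus 0`.
noncomputable def annulusConst : ℝ := π * (1 - exp (-2))

lemma annulusConst_pos : 0 < annulusConst :=
  mul_pos pi_pos (sub_pos.2 (exp_lt_one_iff.2 (by norm_num)))

lemma volume_ball_zero_complex {R : ℝ} (hR : 0 ≤ R) :
    volume (ball (0 : ℂ) R) = ENNReal.ofReal (π * R ^ 2) := by
  rw [Complex.volume_ball, ← ENNReal.ofReal_pow hR, ← ENNReal.ofReal_coe_nnreal, NNReal.coe_real_pi,
    ← ENNReal.ofReal_mul (by positivity), mul_comm]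

lemma volume_expAnnulus (k : ℕ) :
    volume (expAnnulus k) = ENNReal.ofReal (annulusConst * exp (-2 * k)) := by
  have hsub : ball (0 : ℂ) (exp (-(k + 1))) ⊆ ball 0 (exp (-k)) :=
    ball_subset_ball (exp_le_exp.2 (by linarith))
  rw [expAnnulus, measure_sdiff hsub measurableSet_ball.nullMeasurableSet measure_ball_lt_top.ne,
    volume_ball_zero_complex (exp_nonneg _), volume_ball_zero_complex (exp_nonneg _),
    ← ENNReal.ofReal_sub _ (by positivity), annulusConst, ← exp_nat_mul, ← exp_nat_mul]
  congr 1
  rw [show -2 * (k : ℝ) = ((2 : ℕ) : ℝ) * -k by push_cast; ring,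
    show ((2 : ℕ) : ℝ) * -(k + 1) = ((2 : ℕ) : ℝ) * -k + -2 by push_cast; ring, exp_add]
  ring

section Box

variable {α : Type*}

def expBox (m : α → ℕ) : Set (α → ℂ) := Set.univ.pi fun e => expAnnulus (m e)

lemma measurableSet_expBox [Countable α] (m : α → ℕ) : MeasurableSet (expBox m) :=
  .univ_pi fun _ => measurableSet_expAnnulus _

lemma pairwise_disjoint_expBox : Pairwise (Disjoint on (expBox : (α → ℕ) → Set (α → ℂ))) := by
  intro m m' hmm'
  obtain ⟨e, he⟩ := Function.ne_iff.1 hmm'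
  exact Set.disjoint_left.2 fun z hz hz' =>
    Set.disjoint_left.1 (pairwise_disjoint_expAnnulus he) (hz e trivial) (hz' e trivial)

lemma volume_expBox [Fintype α] (m : α → ℕ) :
    volume (expBox m) = ENNReal.ofReal (∏ e, annulusConst * exp (-2 * m e)) := by
  rw [expBox, volume_pi_pi, ENNReal.ofReal_prod_of_nonneg fun e _ =>
    mul_nonneg annulusConst_pos.le (exp_nonneg _)]
  simp_rw [volume_expAnnulus]

lemma expBox_subset_ball [Fintype α] [Nonempty α] {m : α → ℕ} {K : ℕ} (hm : ∀ e, K ≤ m e)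
    {ε : ℝ} (hε : 0 < ε) (hK : exp (-K) < ε) : expBox m ⊆ ball 0 ε := by
  intro z hz
  rw [mem_ball_zero_iff, pi_norm_lt_iff hε]
  intro e
  have hze := (mem_expAnnulus.1 (hz e trivial)).2
  have : exp (-(m e : ℝ)) ≤ exp (-K) := exp_le_exp.2 (neg_le_neg (by exact_mod_cast hm e))
  linarith

end Box

section Integrand

variable {α : Type*}

lemma sum_prod_rpow_le {ℬ : Finset (Finset α)} {r : ℕ} (hcard : ∀ B ∈ ℬ, B.card = r)
    {u : α → ℝ} {T : ℝ} (hu : ∀ e, 0 ≤ u e) (huT : ∀ e, u e ≤ T) (hT : 0 ≤ T) {s : ℝ}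
    (hs : 0 ≤ s) : (∑ B ∈ ℬ, ∏ e ∈ B, u e) ^ s ≤ (ℬ.card : ℝ) ^ s * T ^ (r * s) := by
  have hsum : ∑ B ∈ ℬ, ∏ e ∈ B, u e ≤ ℬ.card * T ^ r := by
    rw [← nsmul_eq_mul, ← sum_const]
    refine sum_le_sum fun B hB => ?_
    rw [← hcard B hB, ← prod_const]
    exact prod_le_prod (fun e _ => hu e) fun e _ => huT e
  calc (∑ B ∈ ℬ, ∏ e ∈ B, u e) ^ s ≤ (ℬ.card * T ^ r) ^ s :=
        rpow_le_rpow (sum_nonneg fun B _ => prod_nonneg fun e _ => hu e) hsum hs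
    _ = (ℬ.card : ℝ) ^ s * T ^ (r * s) := by
        rw [mul_rpow (by positivity) (by positivity), ← rpow_natCast, ← rpow_mul hT]

variable [Fintype α]

noncomputable def basisIntegrand (ℬ : Finset (Finset α)) (s : ℝ) (z : α → ℂ) : ℝ :=
  1 / ((∑ B ∈ ℬ, ∏ e ∈ B, -log ‖z e‖) ^ s * ∏ e, ‖z e‖ ^ 2)

lemma inv_le_basisIntegrand_of_mem_expBox {ℬ : Finset (Finset α)} (hne : ℬ.Nonempty) {r : ℕ}
    (hcard : ∀ B ∈ ℬ, B.card = r) {s : ℝ} (hs : 0 ≤ s) (hrs : (r : ℝ) * s = Fintype.card α)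
    {m : α → ℕ} {z : α → ℂ} (hz : z ∈ expBox m) :
    ((ℬ.card : ℝ) ^ s * (∑ e, ((m e : ℝ) + 1)) ^ Fintype.card α * ∏ e, exp (-2 * m e))⁻¹ ≤
      basisIntegrand ℬ s z := by
  have hbounds e := neg_log_norm_mem_of_mem_expAnnulus (hz e trivial)
  have hnorm e := mem_expAnnulus.1 (hz e trivial)
  have hz0 e : 0 < ‖z e‖ := (exp_pos _).trans_le (hnorm e).1
  have hu e : 0 < -log ‖z e‖ := (Nat.cast_nonneg _).trans_lt (hbounds e).1
  have hψ : 0 < ∑ B ∈ ℬ, ∏ e ∈ B, -log ‖z e‖ := by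
    obtain ⟨B₀, hB₀⟩ := hne
    exact (prod_pos fun e _ => hu e).trans_le
      (single_le_sum (fun B _ => prod_nonneg fun e _ => (hu e).le) hB₀)
  have hψs : (∑ B ∈ ℬ, ∏ e ∈ B, -log ‖z e‖) ^ s ≤
      (ℬ.card : ℝ) ^ s * (∑ e, ((m e : ℝ) + 1)) ^ Fintype.card α := by
    rw [← rpow_natCast, ← hrs]
    refine sum_prod_rpow_le hcard (fun e => (hu e).le) (fun e => (hbounds e).2.trans ?_)
      (by positivity) hs
    exact single_le_sum (f := fun e => (m e : ℝ) + 1) (fun e _ => by positivity) (mem_univ e)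
  have hprod : ∏ e, ‖z e‖ ^ 2 ≤ ∏ e, exp (-2 * m e) := by
    refine prod_le_prod (fun e _ => by positivity) fun e _ => ?_
    rw [show -2 * (m e : ℝ) = (2 : ℕ) * -(m e : ℝ) by push_cast; ring, exp_nat_mul]
    exact pow_le_pow_left₀ (norm_nonneg _) (hnorm e).2.le 2
  rw [basisIntegrand, one_div]
  exact inv_anti₀ (mul_pos (rpow_pos_of_pos hψ s) (prod_pos fun e _ => pow_pos (hz0 e) 2))
    (mul_le_mul hψs hprod (by positivity) (by positivity))

lemma ofReal_le_setLIntegral_expBox [Nonempty α] {ℬ : Finset (Finset α)} (hne : ℬ.Nonempty)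
    {r : ℕ} (hcard : ∀ B ∈ ℬ, B.card = r) {s : ℝ} (hs : 0 ≤ s) (hrs : (r : ℝ) * s = Fintype.card α)
    (m : α → ℕ) :
    ENNReal.ofReal (annulusConst ^ Fintype.card α / (ℬ.card : ℝ) ^ s *
        ((∑ e, ((m e : ℝ) + 1)) ^ Fintype.card α)⁻¹) ≤
      ∫⁻ z in expBox m, ‖basisIntegrand ℬ s z‖ₑ := by
  set g := ((ℬ.card : ℝ) ^ s * (∑ e, ((m e : ℝ) + 1)) ^ Fintype.card α *
    ∏ e, exp (-2 * m e))⁻¹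
  have hB : (0 : ℝ) < ℬ.card := by exact_mod_cast hne.card_pos
  have hT : (0 : ℝ) < ∑ e, ((m e : ℝ) + 1) :=
    sum_pos (fun e _ => by positivity) univ_nonempty
  calc _ = ENNReal.ofReal g * volume (expBox m) := by
        rw [volume_expBox, ← ENNReal.ofReal_mul (by positivity), prod_mul_distrib, prod_const,
          card_univ]
        congr 1
        have : ∏ e, exp (-2 * m e) ≠ 0 := (prod_pos fun e _ => exp_pos _).ne'
        simp only [g]
        field_simp
    _ = ∫⁻ _ in expBox m, ENNReal.ofReal g := (setLIntegral_const _ _).symm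
    _ ≤ _ := setLIntegral_mono' (measurableSet_expBox m) fun z hz =>
        (ENNReal.ofReal_le_ofReal (inv_le_basisIntegrand_of_mem_expBox hne hcard hs hrs hz)).trans
          (ofReal_le_enorm _)

end Integrand

section Dyadic

variable (α : Type*) [Fintype α] [DecidableEq α]

def dyadicCube (j : ℕ) : Finset (α → ℕ) := Fintype.piFinset fun _ => Ico (2 ^ j) (2 ^ (j + 1))

variable {α}

lemma mem_dyadicCube {j : ℕ} {m : α → ℕ} :
    m ∈ dyadicCube α j ↔ ∀ e, 2 ^ j ≤ m e ∧ m e < 2 ^ (j + 1) := by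
  simp [dyadicCube]

lemma card_dyadicCube (j : ℕ) : (dyadicCube α j).card = 2 ^ (j * Fintype.card α) := by
  rw [dyadicCube, Fintype.card_piFinset, prod_const, Nat.card_Ico, pow_succ, Nat.mul_two,
    Nat.add_sub_cancel, card_univ, ← pow_mul]

lemma pairwise_disjoint_dyadicCube [Nonempty α] : Pairwise (Disjoint on dyadicCube α) := by
  refine (pairwise_disjoint_on _).2 fun j k hjk => disjoint_left.2 fun m hj hk => ?_
  obtain ⟨e⟩ := ‹Nonempty α›
  have := Nat.pow_le_pow_right two_pos hjk
  have := (mem_dyadicCube.1 hj e).2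
  have := (mem_dyadicCube.1 hk e).1
  omega

lemma inv_le_sum_dyadicCube [Nonempty α] (j : ℕ) :
    ((2 * Fintype.card α : ℝ) ^ Fintype.card α)⁻¹ ≤
      ∑ m ∈ dyadicCube α j, ((∑ e, ((m e : ℝ) + 1)) ^ Fintype.card α)⁻¹ := by
  set n := Fintype.card α
  have hT m (hm : m ∈ dyadicCube α j) : ∑ e, ((m e : ℝ) + 1) ≤ n * 2 ^ (j + 1) := by
    calc ∑ e, ((m e : ℝ) + 1) ≤ ∑ _e : α, (2 : ℝ) ^ (j + 1) :=
          sum_le_sum fun e _ => by exact_mod_cast (mem_dyadicCube.1 hm e).2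
      _ = n * 2 ^ (j + 1) := by rw [sum_const, card_univ, nsmul_eq_mul]
  calc ((2 * n : ℝ) ^ n)⁻¹ = ∑ m ∈ dyadicCube α j, ((n * 2 ^ (j + 1) : ℝ) ^ n)⁻¹ := by
        have hn : (n : ℝ) ≠ 0 := Nat.cast_ne_zero.2 Fintype.card_ne_zero
        rw [sum_const, card_dyadicCube, nsmul_eq_mul]
        push_cast
        field_simp
        ring
    _ ≤ _ := sum_le_sum fun m hm =>
        inv_anti₀ (pow_pos (sum_pos (fun e _ => by positivity) univ_nonempty) n)
          (pow_le_pow_left₀ (by positivity) (hT m hm) n)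

end Dyadic

section Shell

variable {α : Type*} [Fintype α] [DecidableEq α]

variable (α) in
def dyadicShell (j : ℕ) : Set (α → ℂ) := ⋃ m ∈ dyadicCube α j, expBox m

lemma measurableSet_dyadicShell (j : ℕ) : MeasurableSet (dyadicShell α j) :=
  Finset.measurableSet_biUnion _ fun m _ => measurableSet_expBox m

lemma pairwise_disjoint_dyadicShell [Nonempty α] : Pairwise (Disjoint on dyadicShell α) := by
  intro j k hjk
  refine Set.disjoint_iUnion₂_left.2 fun m hm => Set.disjoint_iUnion₂_right.2 fun m' hm' => ?_
  have hm'' : m ∉ dyadicCube α k := disjoint_left.1 (pairwise_disjoint_dyadicCube hjk) hm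
  exact pairwise_disjoint_expBox fun h => hm'' (h ▸ hm')

lemma dyadicShell_subset_ball [Nonempty α] {K j : ℕ} (hKj : K ≤ j) {ε : ℝ} (hε : 0 < ε)
    (hK : exp (-K) < ε) : dyadicShell α j ⊆ ball 0 ε :=
  Set.iUnion₂_subset fun _ hm => expBox_subset_ball
    (fun e => (hKj.trans Nat.lt_two_pow_self.le).trans (mem_dyadicCube.1 hm e).1) hε hK

lemma ofReal_le_setLIntegral_dyadicShell [Nonempty α] {ℬ : Finset (Finset α)} (hne : ℬ.Nonempty)
    {r : ℕ} (hcard : ∀ B ∈ ℬ, B.card = r) {s : ℝ} (hs : 0 ≤ s)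
    (hrs : (r : ℝ) * s = Fintype.card α) (j : ℕ) :
    ENNReal.ofReal (annulusConst ^ Fintype.card α / (ℬ.card : ℝ) ^ s *
        ((2 * Fintype.card α : ℝ) ^ Fintype.card α)⁻¹) ≤
      ∫⁻ z in dyadicShell α j, ‖basisIntegrand ℬ s z‖ₑ := by
  have hC : 0 ≤ annulusConst ^ Fintype.card α / (ℬ.card : ℝ) ^ s := by
    have := annulusConst_pos
    positivity
  rw [dyadicShell, lintegral_biUnion_finset (pairwise_disjoint_expBox.set_pairwise _)
    fun m _ => measurableSet_expBox m]
  calc _ ≤ ENNReal.ofReal (∑ m ∈ dyadicCube α j, annulusConst ^ Fintype.card α /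
          (ℬ.card : ℝ) ^ s * ((∑ e, ((m e : ℝ) + 1)) ^ Fintype.card α)⁻¹) := by
        rw [← mul_sum]
        exact ENNReal.ofReal_le_ofReal (mul_le_mul_of_nonneg_left (inv_le_sum_dyadicCube j) hC)
    _ = _ := ENNReal.ofReal_sum_of_nonneg fun m _ => by positivity
    _ ≤ _ := sum_le_sum fun m _ => ofReal_le_setLIntegral_expBox hne hcard hs hrs m

end Shell

theorem stmt_12_general {α : Type*} [Fintype α] [Nonempty α]
    (ℬ : Finset (Finset α)) (hne : ℬ.Nonempty)
    (r : ℕ) (hr : 1 ≤ r)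
    (hcard : ∀ B ∈ ℬ, B.card = r)
    (s : ℝ) (hs : s = (Fintype.card α : ℝ) / (r : ℝ))
    (ε : ℝ) (hε0 : 0 < ε) :
    ¬ IntegrableOn
      (fun z : α → ℂ =>
        1 / ((∑ B ∈ ℬ, ∏ e ∈ B, (-Real.log (‖z e‖))) ^ s *
          ∏ e : α, ‖z e‖ ^ 2))
      (Metric.ball 0 ε) := by
  classical
  have hs0 : 0 ≤ s := hs ▸ by positivity
  have hrs : (r : ℝ) * s = Fintype.card α := by
    rw [hs, mul_div_cancel₀ _ (Nat.cast_pos.2 hr).ne']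
  obtain ⟨K, hK⟩ := exists_nat_gt (-log ε)
  have hKε : exp (-K) < ε := (lt_log_iff_exp_lt hε0).1 (by linarith)
  have hδ : ENNReal.ofReal (annulusConst ^ Fintype.card α / (ℬ.card : ℝ) ^ s *
      ((2 * Fintype.card α : ℝ) ^ Fintype.card α)⁻¹) ≠ 0 := by
    have := annulusConst_pos
    have := hne.card_pos
    simp only [ne_eq, ENNReal.ofReal_eq_zero, not_le]
    positivity
  intro hint
  refine hint.2.ne (top_unique ?_)
  calc ⊤ = ∑' _ : ℕ, _ := (ENNReal.tsum_const_eq_top_of_ne_zero hδ).symm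
    _ ≤ ∑' j, ∫⁻ z in dyadicShell α (K + j), ‖basisIntegrand ℬ s z‖ₑ :=
        ENNReal.tsum_le_tsum fun j => ofReal_le_setLIntegral_dyadicShell hne hcard hs0 hrs _
    _ = ∫⁻ z in ⋃ j, dyadicShell α (K + j), ‖basisIntegrand ℬ s z‖ₑ :=
        (lintegral_iUnion (fun j => measurableSet_dyadicShell _)
          (pairwise_disjoint_dyadicShell.comp_of_injective (add_right_injective K)) _).symm
    _ ≤ ∫⁻ z in ball 0 ε, ‖basisIntegrand ℬ s z‖ₑ :=
        lintegral_mono_set (Set.iUnion_subset fun j =>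
          dyadicShell_subset_ball (Nat.le_add_right K j) hε0 hKε)

/-- Lemma 3.2(ii): for a loopless matroid with set of bases `ℬ`, all of cardinality `r ≥ 1`, on a
finite nonempty ground set of cardinality `n`, with basis generating polynomial
`ψ_M(x) = Σ_{B∈ℬ} ∏_{e∈B} x_e`, the function
`z ↦ 1 / (ψ_M((-ln|z_e|)_e)^{n/r} · ∏_e |z_e|²)` is not integrable on any ball of radius
`ε < 1` in `ℂ^E`. -/
theorem stmt_12 {α : Type*} [Fintype α] [DecidableEq α] [Nonempty α]
    (ℬ : Finset (Finset α)) (hne : ℬ.Nonempty)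
    (r : ℕ) (hr : 1 ≤ r)
    (hcard : ∀ B ∈ ℬ, B.card = r)
    (hexch : ∀ B₁ ∈ ℬ, ∀ B₂ ∈ ℬ, ∀ e ∈ B₁ \ B₂,
      ∃ f ∈ B₂ \ B₁, insert f (B₁.erase e) ∈ ℬ)
    (hloopless : ∀ e : α, ∃ B ∈ ℬ, e ∈ B)
    (s : ℝ) (hs : s = (Fintype.card α : ℝ) / (r : ℝ))
    (ε : ℝ) (hε0 : 0 < ε) (hε1 : ε < 1) :
    ¬ IntegrableOn
      (fun z : α → ℂ =>
        1 / ((∑ B ∈ ℬ, ∏ e ∈ B, (-Real.log (‖z e‖))) ^ s *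
          ∏ e : α, ‖z e‖ ^ 2))
      (Metric.ball 0 ε) :=
  stmt_12_general ℬ hne r hr hcard s hs ε hε0
end

section
/- Let E be a finite set, h ≥ 1 an integer, and α : E → ℤ^h a family of vectors such that the ℤ-span of { α(e) : e ∈ E } is all of ℤ^h, and such that for every subset S ⊆ E the quotient ℤ^h / span_ℤ{ α(e) : e ∈ S } is torsion-free. For y ∈ (0,1)^E, let B(ln y) be the real h×h matrix with entries B(ln y)_{ij} = Σ_{e∈E} α(e)_i · α(e)_j · ln(y_e). Then for all indices i, j, the (i,j) entry of the inverse matrix B(ln y)^{-1} tends to 0 as y → 0, i.e., for every sequence y^{(k)} ∈ (0,1)^E with y^{(k)}_e → 0 for every e ∈ E, one has (B(ln y^{(k)})^{-1})_{ij} → 0. -/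
/-!
With `A` the integer matrix whose rows are the `α(e)`, `B(ln y) = Aᵀ · diag(ln y) · A`. Since the
`α(e)` span `ℤ^h`, `A` has a left inverse, so `x ↦ A x` is injective and `μ ‖x‖² ≤ ‖A x‖²` for
some `μ > 0`. Hence `|xᵀ B(ln y) x| ≥ μ (min_e |ln y_e|) ‖x‖²` once all `y_e < 1`, and a matrix
whose quadratic form is bounded below like this by `c ‖x‖²` has inverse entries of size at most
`1 / c`. Finally `min_e |ln y_e| → ∞`.
-/

open Filter Matrix Topology

theorem Matrix.exists_mul_eq_one_of_span_range_eq_top {R m n : Type*} [Semiring R] [Fintype m]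
    [DecidableEq n] (a : m → n → R) (ha : Submodule.span R (Set.range a) = ⊤) :
    ∃ C : Matrix n m R, C * Matrix.of a = 1 := by
  have hsingle (i : n) : ∃ c : m → R, ∑ e, c e • a e = Pi.single i 1 :=
    (Submodule.mem_span_range_iff_exists_fun R).1 (ha ▸ Submodule.mem_top)
  choose C hC using hsingle
  refine ⟨Matrix.of C, Matrix.ext fun i j => ?_⟩
  simpa [Matrix.mul_apply, Matrix.one_apply, Pi.single_apply, Finset.sum_apply, eq_comm]
    using congrFun (hC i) j

theorem Matrix.mulVec_injective_of_mul_eq_one {m n R : Type*} [Fintype m] [Fintype n]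
    [DecidableEq n] [Semiring R] {C : Matrix n m R} {A : Matrix m n R} (h : C * A = 1) :
    Function.Injective A.mulVec := fun x x' hxx' => by
  simpa [mulVec_mulVec, h] using congrArg (C *ᵥ ·) hxx'

theorem sq_norm_le_dotProduct_self {m : Type*} [Fintype m] (v : m → ℝ) : ‖v‖ ^ 2 ≤ v ⬝ᵥ v := by
  have hv : ‖v‖ ≤ √(v ⬝ᵥ v) := by
    refine (pi_norm_le_iff_of_nonneg (Real.sqrt_nonneg _)).2 fun e => ?_
    refine Real.abs_le_sqrt ?_
    simpa [sq, dotProduct] using Finset.single_le_sum (f := fun e => v e * v e)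
      (fun e _ => mul_self_nonneg (v e)) (Finset.mem_univ e)
  calc ‖v‖ ^ 2 ≤ √(v ⬝ᵥ v) ^ 2 := pow_le_pow_left₀ (norm_nonneg v) hv 2
    _ = v ⬝ᵥ v := Real.sq_sqrt (Finset.sum_nonneg fun e _ => mul_self_nonneg (v e))

theorem Matrix.exists_pos_mul_sq_norm_le_dotProduct_mulVec_self {m n : Type*} [Fintype m]
    [Fintype n] (A : Matrix m n ℝ) (hA : Function.Injective A.mulVec) :
    ∃ μ > 0, ∀ x, μ * ‖x‖ ^ 2 ≤ A *ᵥ x ⬝ᵥ A *ᵥ x := by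
  obtain ⟨K, hK, hKA⟩ := (Matrix.mulVecLin A).exists_antilipschitzWith
    (LinearMap.ker_eq_bot.2 hA)
  refine ⟨((K : ℝ) ^ 2)⁻¹, by positivity, fun x => ?_⟩
  have hx : ‖x‖ ≤ K * ‖A *ᵥ x‖ := hKA.le_mul_norm (map_zero _) x
  rw [inv_mul_le_iff₀ (by positivity)]
  calc ‖x‖ ^ 2 ≤ (K * ‖A *ᵥ x‖) ^ 2 := pow_le_pow_left₀ (norm_nonneg x) hx 2
    _ ≤ K ^ 2 * (A *ᵥ x ⬝ᵥ A *ᵥ x) := by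
      rw [mul_pow]; gcongr; exact sq_norm_le_dotProduct_self _

theorem Matrix.of_sum_mul_mul_eq_transpose_mul_diagonal_mul {m n R : Type*} [Fintype m]
    [DecidableEq m] [CommSemiring R] (A : Matrix m n R) (d : m → R) :
    Matrix.of (fun i j => ∑ e, A e i * A e j * d e) = Aᵀ * diagonal d * A := by
  ext i j
  rw [mul_apply]
  simp only [of_apply, mul_diagonal, transpose_apply]
  exact Finset.sum_congr rfl fun e _ => by ring

theorem Matrix.dotProduct_mulVec_transpose_mul_diagonal_mul {m n R : Type*} [Fintype m]
    [Fintype n] [DecidableEq m] [CommSemiring R] (A : Matrix m n R) (d : m → R) (x : n → R) :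
    x ⬝ᵥ (Aᵀ * diagonal d * A) *ᵥ x = ∑ e, d e * (A *ᵥ x) e ^ 2 := by
  rw [← mulVec_mulVec, ← mulVec_mulVec, dotProduct_mulVec, vecMul_transpose]
  simp only [dotProduct, mulVec_diagonal]
  exact Finset.sum_congr rfl fun e _ => by ring

theorem Matrix.abs_inv_apply_le_of_coercive {n : Type*} [Fintype n] [DecidableEq n]
    (M : Matrix n n ℝ) {μ : ℝ} (hμ : 0 < μ) (hM : ∀ x, μ * ‖x‖ ^ 2 ≤ |x ⬝ᵥ M *ᵥ x|) (i j : n) :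
    |M⁻¹ i j| ≤ μ⁻¹ := by
  have hdet : IsUnit M.det := by
    refine isUnit_iff_ne_zero.2 fun h0 => ?_
    obtain ⟨v, hv0, hv⟩ := Matrix.exists_mulVec_eq_zero_iff.2 h0
    have := hM v
    rw [hv, dotProduct_zero, abs_zero] at this
    exact hv0 (norm_eq_zero.1 (pow_eq_zero_iff two_ne_zero |>.1
      (le_antisymm (nonpos_of_mul_nonpos_right this hμ) (sq_nonneg _))))
  -- `w` is the `j`-th column of `M⁻¹`, and `w ⬝ᵥ M *ᵥ w = w j`.
  set w := M⁻¹ *ᵥ Pi.single j 1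
  have hMw : M *ᵥ w = Pi.single j 1 := by
    rw [mulVec_mulVec, mul_nonsing_inv _ hdet, one_mulVec]
  have hw : μ * ‖w‖ ^ 2 ≤ ‖w‖ := by
    calc μ * ‖w‖ ^ 2 ≤ |w j| := by simpa [hMw] using hM w
      _ ≤ ‖w‖ := norm_le_pi_norm w j
  have hwμ : ‖w‖ ≤ μ⁻¹ := by
    rcases (norm_nonneg w).eq_or_lt with h0 | hpos
    · rw [← h0]; positivity
    · rw [← one_div, le_div_iff₀' hμ]
      nlinarith
  calc |M⁻¹ i j| = ‖w i‖ := by simp [w]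
    _ ≤ ‖w‖ := norm_le_pi_norm w i
    _ ≤ μ⁻¹ := hwμ

theorem Matrix.tendsto_inv_transpose_mul_diagonal_mul_apply {ι m n : Type*} [Fintype m]
    [Fintype n] [DecidableEq m] [DecidableEq n] {l : Filter ι} (A : Matrix m n ℝ)
    (hA : Function.Injective A.mulVec) (d : ι → m → ℝ) (hd : ∀ e, Tendsto (d · e) l atBot)
    (i j : n) : Tendsto (fun k => (Aᵀ * diagonal (d k) * A)⁻¹ i j) l (𝓝 0) := by
  obtain ⟨μ, hμ, hAμ⟩ := A.exists_pos_mul_sq_norm_le_dotProduct_mulVec_self hA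
  refine Metric.tendsto_nhds.2 fun ε hε => ?_
  set t := 2 / (μ * ε)
  have ht : 0 < t := by positivity
  filter_upwards [eventually_all.2 fun e => (hd e).eventually_le_atBot (-t)] with k hk
  have hcoer (x : n → ℝ) : t * μ * ‖x‖ ^ 2 ≤ |x ⬝ᵥ (Aᵀ * diagonal (d k) * A) *ᵥ x| := by
    rw [dotProduct_mulVec_transpose_mul_diagonal_mul]
    calc t * μ * ‖x‖ ^ 2 ≤ t * (A *ᵥ x ⬝ᵥ A *ᵥ x) := by
          rw [mul_assoc]; exact mul_le_mul_of_nonneg_left (hAμ x) ht.le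
      _ = ∑ e, t * (A *ᵥ x) e ^ 2 := by simp only [dotProduct, Finset.mul_sum, sq]
      _ ≤ ∑ e, -d k e * (A *ᵥ x) e ^ 2 := Finset.sum_le_sum fun e _ =>
          mul_le_mul_of_nonneg_right (le_neg.1 (hk e)) (sq_nonneg _)
      _ = -∑ e, d k e * (A *ᵥ x) e ^ 2 := by simp only [neg_mul, Finset.sum_neg_distrib]
      _ ≤ _ := neg_le_abs _
  rw [Real.dist_0_eq_abs]
  calc |(Aᵀ * diagonal (d k) * A)⁻¹ i j| ≤ (t * μ)⁻¹ :=
        abs_inv_apply_le_of_coercive _ (by positivity) hcoer i j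
    _ = ε / 2 := by simp only [t]; field_simp
    _ < ε := half_lt_self hε

theorem stmt_15_general {E : Type*} [Fintype E] (h : ℕ) (a : E → Fin h → ℤ)
    (hspan : Submodule.span ℤ (Set.range a) = ⊤)
    (i j : Fin h)
    (y : ℕ → E → ℝ) (hy0 : ∀ k e, 0 < y k e)
    (hlim : ∀ e : E, Filter.Tendsto (fun k => y k e) Filter.atTop (nhds 0)) :
    Filter.Tendsto
      (fun k =>
        (Matrix.of fun i' j' : Fin h =>
            ∑ e : E, ((a e i' : ℝ) * (a e j' : ℝ)) * Real.log (y k e))⁻¹ i j)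
      Filter.atTop (nhds 0) := by
  classical
  obtain ⟨C, hC⟩ := exists_mul_eq_one_of_span_range_eq_top a hspan
  set A : Matrix E (Fin h) ℝ := (Matrix.of a).map (Int.castRingHom ℝ)
  have hA : Function.Injective A.mulVec :=
    mulVec_injective_of_mul_eq_one (C := C.map (Int.castRingHom ℝ)) <| by
      rw [← Matrix.map_mul, hC, Matrix.map_one _ (map_zero _) (map_one _)]
  have hlog (e : E) : Tendsto (fun k => Real.log (y k e)) atTop atBot :=
    Real.tendsto_log_nhdsGT_zero.comp
      (tendsto_nhdsWithin_iff.2 ⟨hlim e, Eventually.of_forall (hy0 · e)⟩)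
  have hB (k : ℕ) : Matrix.of (fun i' j' : Fin h =>
      ∑ e : E, ((a e i' : ℝ) * (a e j' : ℝ)) * Real.log (y k e)) =
      Aᵀ * diagonal (fun e => Real.log (y k e)) * A :=
    A.of_sum_mul_mul_eq_transpose_mul_diagonal_mul _
  simpa only [hB] using A.tendsto_inv_transpose_mul_diagonal_mul_apply hA _ hlog i j

/-- Proposition 2.1(ii): for a unimodular collection of vectors `a : E → ℤ^h` (spanning, with all
quotients `ℤ^h / span{a(e) : e ∈ S}` torsion-free), every entry of the inverse of the real matrix
`B(ln y) = (Σ_e a(e)_i·a(e)_j·ln(y_e))` tends to `0` as `y → 0` within `(0,1)^E`. -/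
theorem stmt_15 {E : Type*} [Fintype E] (h : ℕ) (hh : 1 ≤ h) (a : E → Fin h → ℤ)
    (hspan : Submodule.span ℤ (Set.range a) = ⊤)
    (htf : ∀ S : Set E, NoZeroSMulDivisors ℤ ((Fin h → ℤ) ⧸ Submodule.span ℤ (a '' S)))
    (i j : Fin h)
    (y : ℕ → E → ℝ) (hy0 : ∀ k e, 0 < y k e) (hy1 : ∀ k e, y k e < 1)
    (hlim : ∀ e : E, Filter.Tendsto (fun k => y k e) Filter.atTop (nhds 0)) :
    Filter.Tendsto
      (fun k =>
        (Matrix.of fun i' j' : Fin h =>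
            ∑ e : E, ((a e i' : ℝ) * (a e j' : ℝ)) * Real.log (y k e))⁻¹ i j)
      Filter.atTop (nhds 0) :=
  stmt_15_general h a hspan i j y hy0 hlim
end
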